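/- Let σ ∈ S_r and let s be a positive integer with n − s > r. Then for every λ ⊢ n there exist a sequence of partitions μ^(0) ↗ μ^(1) ↗ … ↗ μ^(s) = λ and real numbers 0 ≤ u^(0), …, u^(s) < 1 with u^(s) = u such that PT^λ_u(σ) = Σ_{i=1}^{s} (dim μ^(i) / dim λ)·MT^{μ^(i)}_{u^(i)}(σ) + (dim μ^(0) / dim λ)·PT^{μ^(0)}_{u^(0)}(σ). -/

import Mathlib

open scoped BigOperators

namespace PaperPlancherel

/-! ### Young diagrams encoded by the multiset of their parts -/

/-- Length of row `b` (0-indexed), rows being sorted in weakly decreasing order. -/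
def rowLen (P : Multiset ℕ) (b : ℕ) : ℕ := ((P.sort (· ≤ ·)).reverse).getD b 0

/-- The cells of the Young diagram of `P` in English notation, as (row, column)
pairs (0-indexed). -/
def cells (P : Multiset ℕ) : Finset (ℕ × ℕ) :=
  (Finset.range P.sum ×ˢ Finset.range P.sum).filter fun c => c.2 < rowLen P c.1

/-- The content of a cell: column index minus row index. -/
def ctt (c : ℕ × ℕ) : ℤ := (c.2 : ℤ) - (c.1 : ℤ)

/-- `T` is a standard Young tableau of shape `P`: it carries the entries `1, …, n`
bijectively on the diagram (and the junk value `0` outside), increasing along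
rows and down columns. -/
def IsSYT (P : Multiset ℕ) (T : ℕ × ℕ → ℕ) : Prop :=
  (∀ c, c ∉ cells P → T c = 0) ∧
  Set.BijOn T ↑(cells P) (Set.Icc 1 P.sum) ∧
  (∀ c ∈ cells P, ∀ c' ∈ cells P, c.1 = c'.1 → c.2 < c'.2 → T c < T c') ∧
  (∀ c ∈ cells P, ∀ c' ∈ cells P, c.2 = c'.2 → c.1 < c'.1 → T c < T c')

/-- The set of standard Young tableaux of shape `P`. -/
def SYTs (P : Multiset ℕ) : Set ((ℕ × ℕ) → ℕ) := {T | IsSYT P T}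

/-- `dim λ`: the number of standard Young tableaux of shape `P`. -/
noncomputable def dimM (P : Multiset ℕ) : ℕ := (SYTs P).ncard

/-- The content `c_k(T)` of the box of `T` containing the entry `k`. -/
def contentOf (P : Multiset ℕ) (T : ℕ × ℕ → ℕ) (k : ℕ) : ℤ :=
  ∑ c ∈ (cells P).filter (fun c => T c = k), ctt c

/-- The signed distance `d_k(T) = c_k(T) - c_{k+1}(T)`. -/
noncomputable def dk (P : Multiset ℕ) (T : ℕ × ℕ → ℕ) (k : ℕ) : ℝ :=
  ((contentOf P T k - contentOf P T (k + 1) : ℤ) : ℝ)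

/-- The tableau `(k, k+1) T`, obtained by exchanging the entries `k` and `k+1`. -/
def swapT (T : ℕ × ℕ → ℕ) (k : ℕ) : ℕ × ℕ → ℕ :=
  fun c => if T c = k then k + 1 else if T c = k + 1 then k else T c

/-- The permutation `σ` moves only points of `{1, …, m}`; this is how we view a member
of the symmetric group `S_m` inside `Equiv.Perm ℕ` (adding fixed points). -/
def SuppIn (σ : Equiv.Perm ℕ) (m : ℕ) : Prop := ∀ x, σ x ≠ x → 1 ≤ x ∧ x ≤ m

open Classical in
/-- `rep` is the family of matrices (indexed by pairs of standard Young tableaux of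
shape `P`) of the Young seminormal representation: it is multiplicative,
and on the adjacent transposition `(k, k+1)` the entry at `(T, S)` is `1/d_k(T)`
if `T = S`, `√(1 - 1/d_k(T)²)` if `S = (k,k+1)T`, and `0` otherwise. -/
def IsSeminormal (P : Multiset ℕ)
    (rep : Equiv.Perm ℕ → ((ℕ × ℕ) → ℕ) → ((ℕ × ℕ) → ℕ) → ℝ) : Prop :=
  (∀ T ∈ SYTs P, ∀ S ∈ SYTs P, rep 1 T S = if T = S then 1 else 0) ∧
  (∀ σ τ : Equiv.Perm ℕ, SuppIn σ P.sum → SuppIn τ P.sum →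
    ∀ T ∈ SYTs P, ∀ S ∈ SYTs P,
      rep (σ * τ) T S = ∑ᶠ U ∈ SYTs P, rep σ T U * rep τ U S) ∧
  (∀ k : ℕ, 1 ≤ k → k + 1 ≤ P.sum → ∀ T ∈ SYTs P, ∀ S ∈ SYTs P,
    rep (Equiv.swap k (k + 1)) T S =
      if T = S then 1 / dk P T k
      else if S = swapT T k then Real.sqrt (1 - 1 / (dk P T k) ^ 2) else 0)

/-- The row of `T` containing the entry `k`. -/
def rowOf (P : Multiset ℕ) (T : ℕ × ℕ → ℕ) (k : ℕ) : ℕ :=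
  ∑ c ∈ (cells P).filter (fun c => T c = k), c.1

/-- `T` comes strictly before `S` in the last letter order: at the largest entry
whose rows in `T` and `S` differ, the row in `T` is lower (i.e. has larger index). -/
def LLBefore (P : Multiset ℕ) (T S : (ℕ × ℕ) → ℕ) : Prop :=
  T ≠ S ∧ ∃ k : ℕ, rowOf P S k < rowOf P T k ∧ ∀ m, k < m → rowOf P T m = rowOf P S m

/-- `e` enumerates the standard Young tableaux of shape `P` in the last letter order. -/
def IsLLEnum (P : Multiset ℕ) (e : Fin (dimM P) → (ℕ × ℕ) → ℕ) : Prop :=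
  (∀ i, e i ∈ SYTs P) ∧ Function.Injective e ∧
    ∀ i j : Fin (dimM P), i < j → LLBefore P (e i) (e j)

/-- A coherent choice, for every shape, of the Young seminormal representation together
with the enumeration of the standard Young tableaux in the last letter order.  (These
data are uniquely determined by the defining properties `rep_spec` and `enum_spec`.) -/
structure SNSystem where
  rep : Multiset ℕ → Equiv.Perm ℕ → ((ℕ × ℕ) → ℕ) → ((ℕ × ℕ) → ℕ) → ℝ
  enum : (P : Multiset ℕ) → Fin (dimM P) → (ℕ × ℕ) → ℕ
  rep_spec : ∀ P, IsSeminormal P (rep P)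
  enum_spec : ∀ P, IsLLEnum P (enum P)

/-- `PS_u^λ(σ)`: the partial sum of the entries of the representation matrix with
(1-based) row and column indices `≤ u · dim λ`, divided by `dim λ`. -/
noncomputable def PSval (S : SNSystem) (P : Multiset ℕ) (u : ℝ) (σ : Equiv.Perm ℕ) : ℝ :=
  (∑ i : Fin (dimM P), ∑ j : Fin (dimM P),
      if ((i : ℕ) + 1 : ℝ) ≤ u * dimM P ∧ ((j : ℕ) + 1 : ℝ) ≤ u * dimM P then
        S.rep P σ (S.enum P i) (S.enum P j)
      else 0) / dimM P

/-- `PT_u^λ(σ)`: the partial trace of the representation matrix up to index `u · dim λ`,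
divided by `dim λ`. -/
noncomputable def PTval (S : SNSystem) (P : Multiset ℕ) (u : ℝ) (σ : Equiv.Perm ℕ) : ℝ :=
  (∑ i : Fin (dimM P),
      if ((i : ℕ) + 1 : ℝ) ≤ u * dimM P then S.rep P σ (S.enum P i) (S.enum P i) else 0) /
    dimM P

/-- `TS^λ(σ) = PS_1^λ(σ)`: the normalized total sum of the entries. -/
noncomputable def TSval (S : SNSystem) (P : Multiset ℕ) (σ : Equiv.Perm ℕ) : ℝ := PSval S P 1 σ

/-- The (non-normalized) character `χ^λ(σ)`: the trace of the representation matrix. -/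
noncomputable def chiVal (S : SNSystem) (P : Multiset ℕ) (σ : Equiv.Perm ℕ) : ℝ :=
  ∑ i : Fin (dimM P), S.rep P σ (S.enum P i) (S.enum P i)

/-- The normalized character `χ̂^λ(σ) = χ^λ(σ) / dim λ`. -/
noncomputable def chiHat (S : SNSystem) (P : Multiset ℕ) (σ : Equiv.Perm ℕ) : ℝ :=
  chiVal S P σ / dimM P

/-! ### Subpartitions and the co-transition distribution -/

/-- The subpartition `μ ↗ λ` obtained by removing one box from (the last row of
size) `a`; every distinct part value of `P` yields exactly one removable corner. -/
def subParts (P : Multiset ℕ) (a : ℕ) : Multiset ℕ :=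
  if a ≤ 1 then P.erase a else (a - 1) ::ₘ P.erase a

/-- `Q` is obtained from `P` by removing one (removable corner) box. -/
def SubOf (Q P : Multiset ℕ) : Prop := ∃ a ∈ P, Q = subParts P a

/-- The content `y` of the removable corner box of the rows of size `a`. -/
def yC (P : Multiset ℕ) (a : ℕ) : ℤ :=
  (a : ℤ) - ((P.filter fun b => a ≤ b).card : ℤ)

/-- The normalized co-transition distribution `F_ct^λ(v) = Σ_{y_j ≤ v√n} dim μ_j / dim λ`. -/
noncomputable def Fct (P : Multiset ℕ) (v : ℝ) : ℝ :=
  ∑ a ∈ P.toFinset,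
    if (yC P a : ℝ) ≤ v * Real.sqrt P.sum then (dimM (subParts P a) : ℝ) / dimM P else 0

/-- `(F_ct^λ)*(u) = sup { z : F_ct^λ(z) ≤ u }`. -/
noncomputable def FctStar (P : Multiset ℕ) (u : ℝ) : ℝ := sSup {z : ℝ | Fct P z ≤ u}

/-- `MT_u^λ(σ)`: the main term for the partial trace,
`Σ_{y_j < v^λ √n} (dim μ_j / dim λ) · χ̂^{μ_j}(σ)` where `v^λ = (F_ct^λ)*(u)`. -/
noncomputable def MTval (S : SNSystem) (P : Multiset ℕ) (u : ℝ) (σ : Equiv.Perm ℕ) : ℝ :=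
  ∑ a ∈ P.toFinset,
    if (yC P a : ℝ) < FctStar P u * Real.sqrt P.sum then
      (dimM (subParts P a) : ℝ) / dimM P * chiHat S (subParts P a) σ
    else 0

/-- `MS_u^λ(σ)`: the main term for the partial sum,
`Σ_{y_j < v^λ √n} (dim μ_j / dim λ) · TS^{μ_j}(σ)` where `v^λ = (F_ct^λ)*(u)`. -/
noncomputable def MSval (S : SNSystem) (P : Multiset ℕ) (u : ℝ) (σ : Equiv.Perm ℕ) : ℝ :=
  ∑ a ∈ P.toFinset,
    if (yC P a : ℝ) < FctStar P u * Real.sqrt P.sum then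
      (dimM (subParts P a) : ℝ) / dimM P * TSval S (subParts P a) σ
    else 0

/-! ### The Plancherel measure -/

/-- The Plancherel weight `(dim λ)² / n!` of a partition `λ ⊢ n`. -/
noncomputable def plWt (n : ℕ) (lam : Nat.Partition n) : ℝ :=
  (dimM lam.parts : ℝ) ^ 2 / n.factorial

/-- Expectation with respect to the Plancherel measure of size `n`. -/
noncomputable def EPl (n : ℕ) (f : Nat.Partition n → ℝ) : ℝ :=
  ∑ lam : Nat.Partition n, plWt n lam * f lam

open Classical in
/-- Probability of an event with respect to the Plancherel measure of size `n`. -/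
noncomputable def PPl (n : ℕ) (A : Nat.Partition n → Prop) : ℝ :=
  ∑ lam : Nat.Partition n, if A lam then plWt n lam else 0

/-! ### Cycle types -/

/-- `σ` is a product of disjoint cycles whose lengths form the multiset `M`. -/
def HasCycles (σ : Equiv.Perm ℕ) (M : Multiset ℕ) : Prop :=
  ∃ l : List (Equiv.Perm ℕ), σ = l.prod ∧ (∀ τ ∈ l, τ.IsCycle) ∧
    l.Pairwise Equiv.Perm.Disjoint ∧
    ((l.map fun τ => Set.ncard {x | τ x ≠ x} : List ℕ) : Multiset ℕ) = M

/-- `σ`, viewed as an element of `S_r`, has cycle type `ρ ⊢ r` (the parts of `ρ` equal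
to `1` accounting for the fixed points of `σ` in `{1, …, r}`). -/
def HasCycleType (σ : Equiv.Perm ℕ) {r : ℕ} (ρ : Nat.Partition r) : Prop :=
  SuppIn σ r ∧ HasCycles σ (ρ.parts.filter fun k => 2 ≤ k)

/-- The cycle `(s+1, s+2, …, s+k)` as a permutation of `ℕ`. -/
def cycleOn (s k : ℕ) : Equiv.Perm ℕ :=
  ((List.range (k - 1)).map fun j => Equiv.swap (s + 1 + j) (s + 2 + j)).prod

/-- A canonical permutation whose cycles are given by the list `l`, placed on
consecutive blocks starting after `s`. -/
def permOfList : List ℕ → ℕ → Equiv.Perm ℕ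
  | [], _ => 1
  | k :: l, s => cycleOn s k * permOfList l (s + k)

/-- A canonical permutation of cycle type `M` (an element of `S_{|M|}`). -/
def permOfType (M : Multiset ℕ) : Equiv.Perm ℕ := permOfList (M.sort (· ≤ ·)) 0

/-- Evaluation of the `m`-th Hermite polynomial (probabilists' convention,
`H₀ = 1`, `H₁ = x`, `x Hₘ = Hₘ₊₁ + m Hₘ₋₁`). -/
noncomputable def hermiteVal (m : ℕ) (x : ℝ) : ℝ := Polynomial.aeval x (Polynomial.hermite m)

end PaperPlancherel
namespace PaperPlancherel

/-! ### Partial permutations -/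

/-- A partial permutation: a permutation together with a finite domain
(the pair `(σ, d)`; in the algebra only pairs with `σ` supported on `d` occur). -/
@[ext]
structure PartialPerm where
  perm : Equiv.Perm ℕ
  dom : Finset ℕ

instance : Mul PartialPerm := ⟨fun p q => ⟨p.perm * q.perm, p.dom ∪ q.dom⟩⟩
instance : One PartialPerm := ⟨⟨1, ∅⟩⟩

@[simp] lemma PartialPerm.mul_perm (p q : PartialPerm) : (p * q).perm = p.perm * q.perm := rfl
@[simp] lemma PartialPerm.mul_dom (p q : PartialPerm) : (p * q).dom = p.dom ∪ q.dom := rfl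
@[simp] lemma PartialPerm.one_perm : (1 : PartialPerm).perm = 1 := rfl
@[simp] lemma PartialPerm.one_dom : (1 : PartialPerm).dom = ∅ := rfl

instance : Monoid PartialPerm where
  mul_assoc a b c := PartialPerm.ext (mul_assoc _ _ _) (Finset.union_assoc _ _ _)
  one_mul a := PartialPerm.ext (one_mul _) (Finset.empty_union _)
  mul_one a := PartialPerm.ext (mul_one _) (Finset.union_empty _)

/-- The algebra `B_n = ℝ[P_n]` of partial permutations (with real coefficients). -/
abbrev PPAlg := MonoidAlgebra ℝ PartialPerm

/-- The partial Jucys–Murphy element `ξ_i = Σ_{j<i} ((j,i), {j,i})`. -/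
noncomputable def xiPP (i : ℕ) : PPAlg :=
  ∑ j ∈ Finset.Ico 1 i, MonoidAlgebra.single (⟨Equiv.swap j i, {j, i}⟩ : PartialPerm) (1 : ℝ)

open Classical in
/-- The element `α_{ς;n} = Σ (σ,d)`, the sum running over the partial permutations with
`d ⊆ {1,…,n}`, `|d| = |ς|` and `σ` of cycle type `ς` on `d`. -/
noncomputable def alphaM (n : ℕ) (ς : Multiset ℕ) : PPAlg :=
  ∑ d ∈ (Finset.Icc 1 n).powersetCard ς.sum,
    ∑ᶠ σ ∈ {σ : Equiv.Perm ℕ |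
        (∀ x, σ x ≠ x → x ∈ d) ∧ HasCycles σ (ς.filter fun k => 2 ≤ k)},
      MonoidAlgebra.single (⟨σ, d⟩ : PartialPerm) (1 : ℝ)

/-- `Cat(k/2)`: the Catalan number `C(k, k/2)/(k/2+1)` when `k` is even, `0` otherwise. -/
noncomputable def CatHalf (k : ℕ) : ℝ :=
  if Even k then (Nat.choose k (k / 2) : ℝ) / (k / 2 + 1) else 0

/-- The modified power sum `p̃_ν(ξ₁, …, ξ_n)` of partial Jucys–Murphy elements:
`Π_i ( p_{ν_i}(ξ₁,…,ξ_n) − Cat(ν_i/2)·(ν_i/2)!·α_{(1^{ν_i/2+1});n} )`. -/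
noncomputable def ptildePP (n : ℕ) (ν : Multiset ℕ) : PPAlg :=
  ((ν.sort (· ≤ ·)).map fun k =>
      (∑ i ∈ Finset.Icc 1 n, xiPP i ^ k) -
        (CatHalf k * (Nat.factorial (k / 2) : ℝ)) •
          alphaM n (Multiset.replicate (k / 2 + 1) 1)).prod

/-- The monoid morphism `(σ, d) ↦ σ`. -/
def permHom : PartialPerm →* Equiv.Perm ℕ where
  toFun p := p.perm
  map_one' := rfl
  map_mul' _ _ := rfl

/-- The morphism `φ_n : B_n → ℝ[S_∞]`, sending `(σ,d)` to `σ`. -/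
noncomputable def phiN : PPAlg →+* MonoidAlgebra ℝ (Equiv.Perm ℕ) :=
  MonoidAlgebra.mapDomainRingHom ℝ permHom

/-- The linear extension of the normalized character `χ̂^λ` to the group algebra. -/
noncomputable def chiHatExt (S : SNSystem) (P : Multiset ℕ)
    (x : MonoidAlgebra ℝ (Equiv.Perm ℕ)) : ℝ :=
  x.coeff.sum fun g c => c * chiHat S P g

/-! ### Power sums of contents -/

/-- The power sum `p_k(C_λ)` of the multiset of contents of the diagram. -/
noncomputable def pContents (P : Multiset ℕ) (k : ℕ) : ℝ :=
  ∑ c ∈ cells P, ((ctt c : ℝ)) ^ k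

/-- The modified power sum evaluated on the multiset of contents:
`p̃_ν(C_λ) = Π_i ( p_{ν_i}(C_λ) − Cat(ν_i/2)·(ν_i/2)!·C(n, ν_i/2+1) )`,
the last factor being the evaluation `χ̂^λ(φ_n(α_{(1^{ν_i/2+1});n}))`. -/
noncomputable def ptildeC (P : Multiset ℕ) (ν : Multiset ℕ) : ℝ :=
  (ν.map fun k =>
      pContents P k -
        CatHalf k * (Nat.factorial (k / 2) : ℝ) * (Nat.choose P.sum (k / 2 + 1) : ℝ)).prod

/-! ### Skew shapes -/

/-- The cells of the skew diagram `λ/ν`. -/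
def cellsD (P Q : Multiset ℕ) : Finset (ℕ × ℕ) := cells P \ cells Q

/-- A standard Young tableau of skew shape `λ/ν`. -/
def IsSkewSYT (P Q : Multiset ℕ) (T : ℕ × ℕ → ℕ) : Prop :=
  (∀ c, c ∉ cellsD P Q → T c = 0) ∧
  Set.BijOn T ↑(cellsD P Q) (Set.Icc 1 (P.sum - Q.sum)) ∧
  (∀ c ∈ cellsD P Q, ∀ c' ∈ cellsD P Q, c.1 = c'.1 → c.2 < c'.2 → T c < T c') ∧
  (∀ c ∈ cellsD P Q, ∀ c' ∈ cellsD P Q, c.2 = c'.2 → c.1 < c'.1 → T c < T c')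

/-- `dim λ/ν`: the number of standard Young tableaux of skew shape `λ/ν`
(zero unless `ν ⊆ λ`). -/
noncomputable def dimSkew (P Q : Multiset ℕ) : ℕ :=
  if cells Q ⊆ cells P then Set.ncard {T | IsSkewSYT P Q T} else 0

/-- The restriction of a tableau to its entries `≤ r` (with `0` outside). -/
def restTab (r : ℕ) (T : ℕ × ℕ → ℕ) : ℕ × ℕ → ℕ := fun c => if T c ≤ r then T c else 0

open Classical in
/-- The cells of a tableau carrying the entries `1, …, r`. -/
noncomputable def restCells (P : Multiset ℕ) (r : ℕ) (T : ℕ × ℕ → ℕ) : Finset (ℕ × ℕ) :=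
  (cells P).filter fun c => 1 ≤ T c ∧ T c ≤ r

/-- The multiset of row lengths of a finite set of cells. -/
def shapeRows (s : Finset (ℕ × ℕ)) : Multiset ℕ :=
  (s.image Prod.fst).val.map fun b => (s.filter fun c => c.1 = b).card

/-! ### Shifted power sums -/

/-- The shifted power sum `p^♯_ρ`, as the function on partitions given by
`p^♯_ρ(λ) = n^{↓r} χ̂^λ_{ρ 1^{n-r}}` for `λ ⊢ n ≥ r`, and `0` otherwise. -/
noncomputable def pSharp (S : SNSystem) {r : ℕ} (ρ : Nat.Partition r) (n : ℕ)
    (lam : Nat.Partition n) : ℝ :=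
  if r ≤ n then (n.descFactorial r : ℝ) * chiHat S lam.parts (permOfType ρ.parts) else 0

/-- Functions on the set of all partitions (of all sizes). -/
abbrev PartFun := ∀ n : ℕ, Nat.Partition n → ℝ

/-- `V^<_k`: the span of the shifted power sums `p^♯_θ` of Kerov degree
`|θ|₁ = |θ| + m₁(θ) < k`. -/
noncomputable def Vlt (S : SNSystem) (k : ℕ) : Submodule ℝ PartFun :=
  Submodule.span ℝ {f | ∃ (m : ℕ) (θ : Nat.Partition m),
    m + θ.parts.count 1 < k ∧ f = fun n lam => pSharp S θ n lam}

/-- `Ṽ^=_k`: the span of the shifted power sums `p^♯_θ` with `|θ|₁ = k` and `m₁(θ) > 0`. -/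
noncomputable def Veq (S : SNSystem) (k : ℕ) : Submodule ℝ PartFun :=
  Submodule.span ℝ {f | ∃ (m : ℕ) (θ : Nat.Partition m),
    m + θ.parts.count 1 = k ∧ 0 < θ.parts.count 1 ∧ f = fun n lam => pSharp S θ n lam}

/-- The partition `(1^k)` of `k`. -/
def onesPartition (k : ℕ) : Nat.Partition k where
  parts := Multiset.replicate k 1
  parts_pos := by intro i hi; rcases Multiset.eq_of_mem_replicate hi with rfl; norm_num
  parts_sum := by simp

/-- The union `ρ ∪ θ` of two partitions. -/
def unionPartition {a b : ℕ} (ρ : Nat.Partition a) (θ : Nat.Partition b) :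
    Nat.Partition (a + b) where
  parts := ρ.parts + θ.parts
  parts_pos := by
    intro i hi
    rcases Multiset.mem_add.mp hi with h | h
    exacts [ρ.parts_pos h, θ.parts_pos h]
  parts_sum := by simp [ρ.parts_sum, θ.parts_sum]

end PaperPlancherel
namespace PaperPlancherel

def rCount (P : Multiset ℕ) (a : ℕ) : ℕ := (P.filter fun b => a ≤ b).card

lemma list_key : ∀ (l : List ℕ), l.Pairwise (· ≥ ·) → ∀ a b, 1 ≤ a →
    (a ≤ l.getD b 0 ↔ b < l.countP (fun x => a ≤ x)) := by
  intro l
  induction l with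
  | nil => intro _ a b ha; simp [ha]; omega
  | cons x l ih =>
    intro hs a b ha
    have hs' : l.Pairwise (· ≥ ·) := hs.of_cons
    have hx : ∀ y ∈ l, y ≤ x := fun y hy => (List.pairwise_cons.mp hs).1 y hy
    cases b with
    | zero =>
      simp only [List.getD_cons_zero, List.countP_cons]
      constructor
      · intro h; simp [h]
      · intro h
        by_contra hax
        push_neg at hax
        have h0 : l.countP (fun x => a ≤ x) = 0 := by
          apply List.countP_eq_zero.mpr
          intro y hy
          simp only [decide_eq_true_eq]
          have := hx y hy; omega
        simp [h0, show ¬ (a ≤ x) by omega] at h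
    | succ b =>
      simp only [List.getD_cons_succ, List.countP_cons]
      rw [ih hs' a b ha]
      by_cases hax : a ≤ x
      · simp [hax]
      · have h0 : l.countP (fun x => a ≤ x) = 0 := by
          apply List.countP_eq_zero.mpr
          intro y hy
          simp only [decide_eq_true_eq]
          have := hx y hy; omega
        simp [h0, hax]

lemma rowLen_key (P : Multiset ℕ) (a b : ℕ) (ha : 1 ≤ a) :
    a ≤ rowLen P b ↔ b < rCount P a := by
  have hsorted : ((P.sort (· ≤ ·)).reverse).Pairwise (· ≥ ·) := by
    rw [List.pairwise_reverse]
    exact (P.pairwise_sort (· ≤ ·) : List.Pairwise _ _)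
  rw [rowLen, list_key _ hsorted a b ha, rCount]
  have h1 : ((P.sort (· ≤ ·)).reverse).countP (fun x => a ≤ x)
      = (P.sort (· ≤ ·)).countP (fun x => a ≤ x) :=
    (List.reverse_perm _).countP_eq _
  rw [h1]
  have h2 : ((P.sort (· ≤ ·) : List ℕ) : Multiset ℕ) = P := P.sort_eq _
  rw [show ((P.sort (· ≤ ·)).countP fun x => a ≤ x) =
      Multiset.countP (fun x => a ≤ x) ((P.sort (· ≤ ·) : List ℕ) : Multiset ℕ) from rfl, h2,
    Multiset.countP_eq_card_filter]

lemma rowLen_anti (P : Multiset ℕ) {b b' : ℕ} (h : b ≤ b') : rowLen P b' ≤ rowLen P b := by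
  by_cases h0 : rowLen P b' = 0
  · omega
  · have h1 : 1 ≤ rowLen P b' := by omega
    have h2 : b' < rCount P (rowLen P b') := (rowLen_key P _ b' h1).mp le_rfl
    have h3 : b < rCount P (rowLen P b') := lt_of_le_of_lt h h2
    exact (rowLen_key P _ b h1).mpr h3

lemma rCount_anti (P : Multiset ℕ) {a a' : ℕ} (h : a ≤ a') : rCount P a' ≤ rCount P a := by
  apply Multiset.card_le_card
  rw [Multiset.le_iff_count]
  intro x
  by_cases hx : a' ≤ x
  · simp [Multiset.count_filter, hx, le_trans h hx]
  · simp [Multiset.count_filter, hx]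

def Pos (P : Multiset ℕ) : Prop := ∀ x ∈ P, 0 < x

lemma nat_eq_of_le_iff {x y : ℕ} (h : ∀ t, 1 ≤ t → (t ≤ x ↔ t ≤ y)) : x = y := by
  by_contra hne
  rcases Nat.lt_or_ge x y with hlt | hge
  · have := h (x+1) (by omega); omega
  · have := h (y+1) (by omega); omega

lemma card_le_sum {P : Multiset ℕ} (hP : Pos P) : P.card ≤ P.sum := by
  induction P using Multiset.induction with
  | empty => simp
  | cons a s ih =>
    have ha : 0 < a := hP a (Multiset.mem_cons_self a s)
    have := ih (fun x hx => hP x (Multiset.mem_cons_of_mem hx))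
    simp only [Multiset.card_cons, Multiset.sum_cons]
    omega

lemma rCount_le_card (P : Multiset ℕ) (a : ℕ) : rCount P a ≤ P.card :=
  Multiset.card_le_card (Multiset.filter_le _ _)

lemma rowLen_le_sum (P : Multiset ℕ) (b : ℕ) : rowLen P b ≤ P.sum := by
  by_cases h : rowLen P b = 0
  · omega
  · have h1 : 1 ≤ rowLen P b := by omega
    have h2 : b < rCount P (rowLen P b) := (rowLen_key P _ b h1).mp le_rfl
    have h3 : ∃ x ∈ P, rowLen P b ≤ x := by
      by_contra hc
      push_neg at hc
      have : (P.filter fun x => rowLen P b ≤ x) = 0 := by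
        apply Multiset.filter_eq_nil.mpr
        intro x hx
        exact not_le.mpr (hc x hx)
      rw [rCount, this] at h2; simp at h2
    obtain ⟨x, hxP, hx⟩ := h3
    exact hx.trans (Multiset.le_sum_of_mem hxP)

lemma mem_cells {P : Multiset ℕ} (hP : Pos P) (c : ℕ × ℕ) :
    c ∈ cells P ↔ c.2 < rowLen P c.1 := by
  constructor
  · intro h; exact (Finset.mem_filter.mp h).2
  · intro h
    refine Finset.mem_filter.mpr ⟨Finset.mem_product.mpr ⟨?_, ?_⟩, h⟩
    · have h1 : 1 ≤ rowLen P c.1 := by omega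
      have h2 : c.1 < rCount P 1 := by
        have := (rowLen_key P 1 c.1 le_rfl).mp h1
        exact this
      have := (rCount_le_card P 1).trans (card_le_sum hP)
      simp only [Finset.mem_range]; omega
    · have := rowLen_le_sum P c.1
      simp only [Finset.mem_range]; omega

lemma rCount_pos_of_mem {P : Multiset ℕ} {a : ℕ} (ha : a ∈ P) : 0 < rCount P a := by
  rw [rCount, Multiset.card_pos]
  intro h
  have : a ∈ P.filter fun b => a ≤ b := Multiset.mem_filter.mpr ⟨ha, le_rfl⟩
  rw [h] at this; simp at this

lemma rCount_lt_of_mem {P : Multiset ℕ} {a a' : ℕ} (ha : a ∈ P) (h : a < a') :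
    rCount P a' < rCount P a := by
  have hle : (P.filter fun b => a' ≤ b) ≤ (P.filter fun b => a ≤ b) := by
    rw [Multiset.le_iff_count]
    intro x
    by_cases hx : a' ≤ x
    · simp [Multiset.count_filter, hx, le_trans (le_of_lt h) hx]
    · simp [Multiset.count_filter, hx]
  apply Multiset.card_lt_card
  apply lt_of_le_of_ne hle
  intro heq
  have h1 : a ∈ P.filter fun b => a ≤ b := Multiset.mem_filter.mpr ⟨ha, le_rfl⟩
  rw [← heq] at h1
  have := (Multiset.mem_filter.mp h1).2
  omega

lemma yC_strictMono {P : Multiset ℕ} {a a' : ℕ} (ha : a ∈ P) (h : a < a') :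
    yC P a < yC P a' := by
  have := rCount_lt_of_mem ha h
  have h2 : rCount P a' < rCount P a := this
  simp only [yC]
  have e1 : ((P.filter fun b => a ≤ b).card : ℤ) = (rCount P a : ℤ) := rfl
  have e2 : ((P.filter fun b => a' ≤ b).card : ℤ) = (rCount P a' : ℤ) := rfl
  rw [e1, e2]
  push_cast
  omega

/-- the 0-indexed row of the removable corner for part value `a`. -/
def cRow (P : Multiset ℕ) (a : ℕ) : ℕ := rCount P a - 1

def corner (P : Multiset ℕ) (a : ℕ) : ℕ × ℕ := (cRow P a, a - 1)

lemma rowLen_cRow {P : Multiset ℕ} {a : ℕ} (hP : Pos P) (ha : a ∈ P) :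
    rowLen P (cRow P a) = a := by
  have ha1 : 1 ≤ a := hP a ha
  have hpos := rCount_pos_of_mem ha
  have h1 : a ≤ rowLen P (cRow P a) := (rowLen_key P a _ ha1).mpr (by simp [cRow]; omega)
  have h2 : ¬ (a + 1 ≤ rowLen P (cRow P a)) := by
    rw [rowLen_key P _ _ (by omega)]
    have := rCount_lt_of_mem ha (show a < a + 1 by omega)
    simp [cRow]; omega
  omega

lemma rowLen_below_cRow {P : Multiset ℕ} {a : ℕ} (hP : Pos P) (ha : a ∈ P) :
    rowLen P (cRow P a + 1) < a := by
  have ha1 : 1 ≤ a := hP a ha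
  have hpos := rCount_pos_of_mem ha
  by_contra h
  push_neg at h
  have := (rowLen_key P a _ ha1).mp h
  simp [cRow] at this; omega

lemma sum_subParts {P : Multiset ℕ} {a : ℕ} (hP : Pos P) (ha : a ∈ P) :
    (subParts P a).sum = P.sum - 1 := by
  have ha1 : 1 ≤ a := hP a ha
  have hP' : P = a ::ₘ P.erase a := (Multiset.cons_erase ha).symm
  have hsum : P.sum = a + (P.erase a).sum := by
    conv_lhs => rw [hP']
    simp
  by_cases h : a ≤ 1
  · rw [subParts, if_pos h]; omega
  · rw [subParts, if_neg h]; simp; omega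

lemma pos_subParts {P : Multiset ℕ} {a : ℕ} (hP : Pos P) (ha : a ∈ P) :
    Pos (subParts P a) := by
  intro x hx
  by_cases h : a ≤ 1
  · rw [subParts, if_pos h] at hx
    exact hP x (Multiset.mem_of_mem_erase hx)
  · rw [subParts, if_neg h] at hx
    rcases Multiset.mem_cons.mp hx with h1 | h1
    · omega
    · exact hP x (Multiset.mem_of_mem_erase h1)

lemma rCount_subParts {P : Multiset ℕ} {a : ℕ} (hP : Pos P) (ha : a ∈ P)
    (b : ℕ) (hb : 1 ≤ b) :
    rCount (subParts P a) b = rCount P b - (if b = a then 1 else 0) := by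
  have ha1 : 1 ≤ a := hP a ha
  have hP' : P = a ::ₘ P.erase a := (Multiset.cons_erase ha).symm
  have hPc : rCount P b = rCount (P.erase a) b + (if b ≤ a then 1 else 0) := by
    conv_lhs => rw [hP']
    rw [rCount, Multiset.filter_cons]
    by_cases h : b ≤ a
    · rw [if_pos h, if_pos h]; simp [rCount]
    · rw [if_neg h, if_neg h]; simp [rCount]
  by_cases h : a ≤ 1
  · have haa : a = 1 := by omega
    subst haa
    rw [subParts, if_pos le_rfl]
    by_cases hb1 : b = 1
    · subst hb1
      rw [if_pos le_rfl] at hPc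
      rw [if_pos rfl]
      omega
    · rw [if_neg (show ¬ b ≤ 1 by omega)] at hPc
      rw [if_neg hb1]
      omega
  · have hQc : rCount (subParts P a) b
        = rCount (P.erase a) b + (if b ≤ a - 1 then 1 else 0) := by
      rw [subParts, if_neg h, rCount, Multiset.filter_cons]
      by_cases h1 : b ≤ a - 1
      · rw [if_pos h1]; simp [rCount, h1]
      · rw [if_neg h1]; simp [rCount, h1]
    rw [hQc]
    by_cases hba : b = a
    · rw [if_pos (show b ≤ a by omega)] at hPc
      rw [if_neg (show ¬ b ≤ a - 1 by omega), if_pos hba]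
      omega
    · by_cases hb2 : b ≤ a - 1
      · rw [if_pos (show b ≤ a by omega)] at hPc
        rw [if_pos hb2, if_neg hba]
        omega
      · rw [if_neg (show ¬ b ≤ a by omega)] at hPc
        rw [if_neg hb2, if_neg hba]
        omega

lemma rowLen_subParts {P : Multiset ℕ} {a : ℕ} (hP : Pos P) (ha : a ∈ P) (b : ℕ) :
    rowLen (subParts P a) b = if b = cRow P a then a - 1 else rowLen P b := by
  have ha1 : 1 ≤ a := hP a ha
  have hpos := rCount_pos_of_mem ha
  apply nat_eq_of_le_iff
  intro t ht
  rw [rowLen_key _ t b ht, rCount_subParts hP ha t ht]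
  by_cases hba : b = cRow P a
  · subst hba
    rw [if_pos rfl]
    constructor
    · intro hlt
      by_contra hc
      push_neg at hc
      have hta : a ≤ t := by omega
      have : rCount P t ≤ rCount P a := rCount_anti P hta
      by_cases hteqa : t = a
      · subst hteqa
        rw [if_pos rfl] at hlt
        simp only [cRow] at hlt
        omega
      · have : rCount P t < rCount P a := by
          have := rCount_lt_of_mem ha (show a < t by omega)
          omega
        simp [hteqa, cRow] at hlt
        omega
    · intro hta
      have h1 : t ≤ a := by omega
      have h2 : t ≠ a := by omega
      rw [if_neg h2]
      have : rCount P a ≤ rCount P t := rCount_anti P h1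
      simp [cRow]; omega
  · rw [if_neg hba, rowLen_key _ t b ht]
    by_cases hteqa : t = a
    · subst hteqa
      simp only [if_pos rfl]
      simp [cRow] at hba ⊢
      omega
    · simp [hteqa]

lemma corner_mem_cells {P : Multiset ℕ} {a : ℕ} (hP : Pos P) (ha : a ∈ P) :
    corner P a ∈ cells P := by
  rw [mem_cells hP]
  have := rowLen_cRow hP ha
  have ha1 : 1 ≤ a := hP a ha
  simp [corner]; omega

lemma cells_subParts {P : Multiset ℕ} {a : ℕ} (hP : Pos P) (ha : a ∈ P) :
    cells (subParts P a) = (cells P).erase (corner P a) := by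
  ext c
  rw [Finset.mem_erase, mem_cells (pos_subParts hP ha), mem_cells hP,
    rowLen_subParts hP ha]
  have hc := rowLen_cRow hP ha
  have ha1 : 1 ≤ a := hP a ha
  constructor
  · intro h
    by_cases hb : c.1 = cRow P a
    · rw [if_pos hb] at h
      constructor
      · intro heq; rw [heq] at h; simp [corner] at h
      · rw [hb]; omega
    · rw [if_neg hb] at h
      constructor
      · intro heq; rw [heq] at hb; simp [corner] at hb
      · exact h
  · rintro ⟨hne, hlt⟩
    by_cases hb : c.1 = cRow P a
    · rw [if_pos hb]
      have : c.2 ≠ a - 1 := by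
        intro heq
        apply hne
        have : c = (c.1, c.2) := rfl
        rw [this, hb, heq]; rfl
      rw [hb] at hlt; omega
    · rw [if_neg hb]; exact hlt

lemma sum_pos_of_mem {P : Multiset ℕ} {a : ℕ} (hP : Pos P) (ha : a ∈ P) : 1 ≤ P.sum := by
  have h1 : 1 ≤ a := hP a ha
  have := Multiset.le_sum_of_mem ha
  omega

section SYTfacts

variable {P : Multiset ℕ} {T : (ℕ × ℕ) → ℕ}

lemma isSYT_mem_Icc (hT : IsSYT P T) {c : ℕ × ℕ} (hc : c ∈ cells P) :
    1 ≤ T c ∧ T c ≤ P.sum := by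
  have := hT.2.1.mapsTo (Finset.mem_coe.mpr hc)
  exact ⟨this.1, this.2⟩

lemma syts_finite (P : Multiset ℕ) : (SYTs P).Finite := by
  classical
  have h : Set.InjOn (fun T : (ℕ × ℕ) → ℕ => (fun c : ↥(cells P) => T c)) (SYTs P) := by
    intro T hT U hU h
    funext c
    by_cases hc : c ∈ cells P
    · exact congrFun h ⟨c, hc⟩
    · rw [hT.1 c hc, hU.1 c hc]
  apply Set.Finite.of_finite_image _ h
  apply Set.Finite.subset (Set.Finite.pi (fun _ : ↥(cells P) => Set.finite_Iic P.sum))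
  rintro g ⟨T, hT, rfl⟩
  intro c _
  exact (isSYT_mem_Icc hT c.2).2

lemma exists_unique_mcell (hT : IsSYT P T) (hm : 1 ≤ P.sum) :
    ∃ c ∈ cells P, T c = P.sum ∧ ∀ c' ∈ cells P, T c' = P.sum → c' = c := by
  have hsurj := hT.2.1.surjOn
  have hmem : P.sum ∈ Set.Icc 1 P.sum := by constructor <;> omega
  obtain ⟨c, hc, hTc⟩ := hsurj hmem
  refine ⟨c, hc, hTc, fun c' hc' hTc' => ?_⟩
  exact hT.2.1.injOn hc' hc (by rw [hTc, hTc'])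

lemma mcell_filter (hT : IsSYT P T) {c : ℕ × ℕ} (hc : c ∈ cells P) (hTc : T c = P.sum)
    (hm : 1 ≤ P.sum) :
    (cells P).filter (fun c' => T c' = P.sum) = {c} := by
  obtain ⟨c0, hc0, hTc0, huniq⟩ := exists_unique_mcell hT hm
  have hcc0 : c = c0 := huniq c hc hTc
  subst hcc0
  ext c'
  simp only [Finset.mem_filter, Finset.mem_singleton]
  constructor
  · rintro ⟨h1, h2⟩; exact huniq c' h1 h2
  · rintro rfl; exact ⟨hc, hTc⟩

lemma rowOf_max (hT : IsSYT P T) {c : ℕ × ℕ} (hc : c ∈ cells P) (hTc : T c = P.sum)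
    (hm : 1 ≤ P.sum) : rowOf P T P.sum = c.1 := by
  rw [rowOf, mcell_filter hT hc hTc hm, Finset.sum_singleton]

lemma rowOf_eq_zero_of_gt (hT : IsSYT P T) {k : ℕ} (hk : P.sum < k) : rowOf P T k = 0 := by
  rw [rowOf]
  apply Finset.sum_eq_zero
  intro c hc
  exfalso
  rw [Finset.mem_filter] at hc
  have := isSYT_mem_Icc hT hc.1
  omega

lemma mcell_is_corner (hP : Pos P) (hT : IsSYT P T) {c : ℕ × ℕ} (hc : c ∈ cells P)
    (hTc : T c = P.sum) :
    rowLen P c.1 ∈ P ∧ c = corner P (rowLen P c.1) := by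
  set a := rowLen P c.1 with hadef
  have hc2 : c.2 < a := (mem_cells hP c).mp hc
  have ha1 : 1 ≤ a := by omega
  have hm : 1 ≤ P.sum := by
    have := rowLen_le_sum P c.1; omega
  -- c.2 = a - 1
  have hcol : c.2 = a - 1 := by
    by_contra hcol
    have h1 : c.2 + 1 < a := by omega
    have hc' : ((c.1, c.2 + 1) : ℕ × ℕ) ∈ cells P := by
      rw [mem_cells hP]; exact h1
    have hlt := hT.2.2.1 c hc (c.1, c.2 + 1) hc' rfl (by omega)
    have := isSYT_mem_Icc hT hc'
    omega
  -- c.1 + 1 = rCount P a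
  have hrow0 : c.1 < rCount P a := (rowLen_key P a c.1 ha1).mp le_rfl
  have hrow : c.1 + 1 = rCount P a := by
    by_contra hrow
    have h1 : c.1 + 1 < rCount P a := by omega
    have h2 : a ≤ rowLen P (c.1 + 1) := (rowLen_key P a (c.1 + 1) ha1).mpr h1
    have hc' : ((c.1 + 1, c.2) : ℕ × ℕ) ∈ cells P := by
      rw [mem_cells hP]; simp; omega
    have hlt := hT.2.2.2 c hc (c.1 + 1, c.2) hc' rfl (by omega)
    have := isSYT_mem_Icc hT hc'
    omega
  -- a ∈ P
  have haP : a ∈ P := by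
    by_contra haP
    have heq : rCount P (a + 1) = rCount P a := by
      rw [rCount, rCount]
      congr 1
      apply Multiset.filter_congr
      intro x hx
      constructor
      · intro h; simp at h ⊢; omega
      · intro h
        simp at h ⊢
        rcases Nat.lt_or_ge a x with h1 | h1
        · omega
        · exfalso
          have : x = a := by omega
          rw [this] at hx
          exact haP hx
    have h1 : ¬ (a + 1 ≤ rowLen P c.1) := by omega
    rw [rowLen_key P (a+1) c.1 (by omega)] at h1
    omega
  refine ⟨haP, ?_⟩
  have : c = (c.1, c.2) := rfl
  rw [this, hcol]
  simp only [corner, cRow]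
  congr 1
  omega

/-- The part value of the corner containing the maximal entry. -/
def aOf (P : Multiset ℕ) (T : (ℕ × ℕ) → ℕ) : ℕ := rowLen P (rowOf P T P.sum)

lemma aOf_spec (hP : Pos P) (hm : 1 ≤ P.sum) (hT : IsSYT P T) :
    aOf P T ∈ P ∧ T (corner P (aOf P T)) = P.sum := by
  obtain ⟨c, hc, hTc, _⟩ := exists_unique_mcell hT hm
  have hr : rowOf P T P.sum = c.1 := rowOf_max hT hc hTc hm
  obtain ⟨haP, hcorner⟩ := mcell_is_corner hP hT hc hTc
  rw [aOf, hr]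
  exact ⟨haP, by rw [← hcorner]; exact hTc⟩

lemma aOf_eq {a : ℕ} (hP : Pos P) (ha : a ∈ P) (hT : IsSYT P T)
    (hc : T (corner P a) = P.sum) : aOf P T = a := by
  have hm : 1 ≤ P.sum := sum_pos_of_mem hP ha
  have hcm : corner P a ∈ cells P := corner_mem_cells hP ha
  have hr : rowOf P T P.sum = (corner P a).1 := rowOf_max hT hcm hc hm
  rw [aOf, hr]
  exact rowLen_cRow hP ha

end SYTfacts

section DelIns

variable {P : Multiset ℕ} {a : ℕ}

/-- deletion of the maximal entry -/
def delT (P : Multiset ℕ) (T : (ℕ × ℕ) → ℕ) : (ℕ × ℕ) → ℕ :=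
  fun c => if T c = P.sum then 0 else T c

/-- insertion of the maximal entry at the corner of part `a` -/
def insT (P : Multiset ℕ) (a : ℕ) (T' : (ℕ × ℕ) → ℕ) : (ℕ × ℕ) → ℕ :=
  fun c => if c = corner P a then P.sum else T' c

variable (hP : Pos P) (ha : a ∈ P)

lemma mem_cells_subParts (hP : Pos P) (ha : a ∈ P) (c : ℕ × ℕ) :
    c ∈ cells (subParts P a) ↔ c ∈ cells P ∧ c ≠ corner P a := by
  rw [cells_subParts hP ha, Finset.mem_erase]
  tauto

lemma delT_mem {T : (ℕ × ℕ) → ℕ} (hP : Pos P) (ha : a ∈ P) (hT : IsSYT P T)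
    (hc : T (corner P a) = P.sum) : IsSYT (subParts P a) (delT P T) := by
  have hm : 1 ≤ P.sum := sum_pos_of_mem hP ha
  have hsum : (subParts P a).sum = P.sum - 1 := sum_subParts hP ha
  have hval : ∀ c ∈ cells (subParts P a), delT P T c = T c ∧ T c ≠ P.sum := by
    intro c hcm
    rw [mem_cells_subParts hP ha] at hcm
    have hTc : T c ≠ P.sum := by
      intro h
      exact hcm.2 (hT.2.1.injOn (Finset.mem_coe.mpr hcm.1)
        (Finset.mem_coe.mpr (corner_mem_cells hP ha)) (by rw [h, hc]))
    exact ⟨by rw [delT, if_neg hTc], hTc⟩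
  refine ⟨?_, ⟨?_, ?_, ?_⟩, ?_, ?_⟩
  · intro c hcm
    rw [mem_cells_subParts hP ha] at hcm
    push_neg at hcm
    by_cases h1 : c ∈ cells P
    · have := hcm h1
      rw [this, delT, hc]; simp
    · rw [delT, hT.1 c h1]
      simp
  · intro c hcm
    have hc1 := (hval c (Finset.mem_coe.mp hcm)).1
    have hc2 := (hval c (Finset.mem_coe.mp hcm)).2
    have hcP : c ∈ cells P := ((mem_cells_subParts hP ha c).mp (Finset.mem_coe.mp hcm)).1
    have h3 := isSYT_mem_Icc hT hcP
    rw [hc1, hsum]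
    exact ⟨h3.1, by omega⟩
  · intro c hcm c' hcm' heq
    have hc1 := (hval c (Finset.mem_coe.mp hcm)).1
    have hc1' := (hval c' (Finset.mem_coe.mp hcm')).1
    rw [hc1, hc1'] at heq
    exact hT.2.1.injOn
      (Finset.mem_coe.mpr ((mem_cells_subParts hP ha c).mp (Finset.mem_coe.mp hcm)).1)
      (Finset.mem_coe.mpr ((mem_cells_subParts hP ha c').mp (Finset.mem_coe.mp hcm')).1) heq
  · intro k hk
    rw [hsum] at hk
    have hk' : k ∈ Set.Icc 1 P.sum := by
      rcases hk with ⟨h1, h2⟩; constructor <;> omega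
    obtain ⟨c, hcm, hTc⟩ := hT.2.1.surjOn hk'
    have hkne : k ≠ P.sum := by rcases hk with ⟨h1, h2⟩; omega
    have hcQ : c ∈ cells (subParts P a) := by
      rw [mem_cells_subParts hP ha]
      refine ⟨Finset.mem_coe.mp hcm, ?_⟩
      intro h
      rw [h, hc] at hTc
      exact hkne hTc.symm
    exact ⟨c, Finset.mem_coe.mpr hcQ, by rw [(hval c hcQ).1, hTc]⟩
  · intro c hcm c' hcm' h1 h2
    rw [(hval c hcm).1, (hval c' hcm').1]
    exact hT.2.2.1 c ((mem_cells_subParts hP ha c).mp hcm).1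
      c' ((mem_cells_subParts hP ha c').mp hcm').1 h1 h2
  · intro c hcm c' hcm' h1 h2
    rw [(hval c hcm).1, (hval c' hcm').1]
    exact hT.2.2.2 c ((mem_cells_subParts hP ha c).mp hcm).1
      c' ((mem_cells_subParts hP ha c').mp hcm').1 h1 h2

lemma insT_corner (T' : (ℕ × ℕ) → ℕ) : insT P a T' (corner P a) = P.sum := by
  rw [insT, if_pos rfl]

lemma insT_mem {T' : (ℕ × ℕ) → ℕ} (hP : Pos P) (ha : a ∈ P)
    (hT' : IsSYT (subParts P a) T') : IsSYT P (insT P a T') := by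
  have hm : 1 ≤ P.sum := sum_pos_of_mem hP ha
  have hsum : (subParts P a).sum = P.sum - 1 := sum_subParts hP ha
  have ha1 : 1 ≤ a := hP a ha
  have hcornerP : corner P a ∈ cells P := corner_mem_cells hP ha
  have hvalQ : ∀ c ∈ cells (subParts P a),
      insT P a T' c = T' c ∧ 1 ≤ T' c ∧ T' c ≤ P.sum - 1 := by
    intro c hcm
    have h2 := (mem_cells_subParts hP ha c).mp hcm
    have h3 := isSYT_mem_Icc hT' hcm
    rw [hsum] at h3
    exact ⟨by rw [insT, if_neg h2.2], h3⟩
  -- key: a cell of `cells P` is either the corner or in `cells (subParts P a)`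
  have hsplit : ∀ c ∈ cells P, c = corner P a ∨ c ∈ cells (subParts P a) := by
    intro c hcm
    by_cases h : c = corner P a
    · exact Or.inl h
    · exact Or.inr ((mem_cells_subParts hP ha c).mpr ⟨hcm, h⟩)
  refine ⟨?_, ⟨?_, ?_, ?_⟩, ?_, ?_⟩
  · intro c hcm
    have hne : c ≠ corner P a := fun h => hcm (h ▸ hcornerP)
    rw [insT, if_neg hne]
    apply hT'.1
    rw [mem_cells_subParts hP ha]
    tauto
  · intro c hcm
    rcases hsplit c (Finset.mem_coe.mp hcm) with h | h
    · rw [h, insT_corner]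
      constructor <;> omega
    · have := hvalQ c h
      rw [this.1]
      constructor
      · exact this.2.1
      · omega
  · intro c hcm c' hcm' heq
    rcases hsplit c (Finset.mem_coe.mp hcm) with h | h <;>
      rcases hsplit c' (Finset.mem_coe.mp hcm') with h' | h'
    · rw [h, h']
    · exfalso
      rw [h, insT_corner, (hvalQ c' h').1] at heq
      have := (hvalQ c' h').2.2
      omega
    · exfalso
      rw [h', insT_corner, (hvalQ c h).1] at heq
      have := (hvalQ c h).2.2
      omega
    · rw [(hvalQ c h).1, (hvalQ c' h').1] at heq
      exact hT'.2.1.injOn (Finset.mem_coe.mpr h) (Finset.mem_coe.mpr h') heq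
  · intro k hk
    by_cases hkm : k = P.sum
    · exact ⟨corner P a, Finset.mem_coe.mpr hcornerP, by rw [insT_corner, hkm]⟩
    · have hk' : k ∈ Set.Icc 1 (subParts P a).sum := by
        rw [hsum]
        rcases hk with ⟨h1, h2⟩
        constructor <;> omega
      obtain ⟨c, hcm, hTc⟩ := hT'.2.1.surjOn hk'
      refine ⟨c, Finset.mem_coe.mpr ((mem_cells_subParts hP ha c).mp
        (Finset.mem_coe.mp hcm)).1, ?_⟩
      rw [(hvalQ c (Finset.mem_coe.mp hcm)).1, hTc]
  · -- rows
    intro c hcm c' hcm' h1 h2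
    rcases hsplit c hcm with h | h <;> rcases hsplit c' hcm' with h' | h'
    · exfalso; have heq : c = c' := h.trans h'.symm; rw [heq] at h2; omega
    · -- c is the corner, c' to its right in the same row: impossible
      exfalso
      have hrow : c'.1 = cRow P a := by rw [← h1, h]; rfl
      have hcol : a - 1 < c'.2 := by
        have : c.2 = a - 1 := by rw [h]; rfl
        omega
      have hlt := (mem_cells hP c').mp hcm'
      rw [hrow, rowLen_cRow hP ha] at hlt
      omega
    · -- c' is the corner
      rw [h', insT_corner, (hvalQ c h).1]
      have := (hvalQ c h).2.2
      omega
    · rw [(hvalQ c h).1, (hvalQ c' h').1]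
      exact hT'.2.2.1 c h c' h' h1 h2
  · -- columns
    intro c hcm c' hcm' h1 h2
    rcases hsplit c hcm with h | h <;> rcases hsplit c' hcm' with h' | h'
    · exfalso; have heq : c = c' := h.trans h'.symm; rw [heq] at h2; omega
    · -- c is the corner, c' below it: impossible
      exfalso
      have hcol : c'.2 = a - 1 := by
        have : c.2 = a - 1 := by rw [h]; rfl
        omega
      have hrowlt : cRow P a < c'.1 := by
        have : c.1 = cRow P a := by rw [h]; rfl
        omega
      have hlt := (mem_cells hP c').mp hcm'
      have hanti : rowLen P c'.1 ≤ rowLen P (cRow P a + 1) := rowLen_anti P (by omega)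
      have hbelow := rowLen_below_cRow hP ha
      omega
    · rw [h', insT_corner, (hvalQ c h).1]
      have := (hvalQ c h).2.2
      omega
    · rw [(hvalQ c h).1, (hvalQ c' h').1]
      exact hT'.2.2.2 c h c' h' h1 h2

lemma delT_insT {T' : (ℕ × ℕ) → ℕ} (hP : Pos P) (ha : a ∈ P)
    (hT' : IsSYT (subParts P a) T') : delT P (insT P a T') = T' := by
  have hm : 1 ≤ P.sum := sum_pos_of_mem hP ha
  have hsum : (subParts P a).sum = P.sum - 1 := sum_subParts hP ha
  funext c
  by_cases h : c = corner P a
  · rw [h, delT, insT_corner, if_pos rfl]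
    have : corner P a ∉ cells (subParts P a) := by
      rw [mem_cells_subParts hP ha]
      tauto
    exact (hT'.1 _ this).symm
  · rw [delT, insT, if_neg h]
    by_cases h2 : c ∈ cells (subParts P a)
    · have := isSYT_mem_Icc hT' h2
      rw [hsum] at this
      rw [if_neg (by omega)]
    · rw [hT'.1 c h2]
      rw [if_neg (by omega)]

lemma insT_delT {T : (ℕ × ℕ) → ℕ} (hP : Pos P) (ha : a ∈ P) (hT : IsSYT P T)
    (hc : T (corner P a) = P.sum) : insT P a (delT P T) = T := by
  have hm : 1 ≤ P.sum := sum_pos_of_mem hP ha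
  funext c
  by_cases h : c = corner P a
  · rw [h, insT_corner, hc]
  · rw [insT, if_neg h, delT]
    have hne : T c ≠ P.sum := by
      intro hTc
      by_cases hcm : c ∈ cells P
      · exact h (hT.2.1.injOn (Finset.mem_coe.mpr hcm)
          (Finset.mem_coe.mpr (corner_mem_cells hP ha)) (by rw [hTc, hc]))
      · rw [hT.1 c hcm] at hTc; omega
    rw [if_neg hne]

end DelIns

section Dims

variable {P : Multiset ℕ} {a : ℕ}

lemma syts_sum_zero (h : P.sum = 0) : SYTs P = {fun _ => 0} := by
  have hcells : cells P = ∅ := by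
    rw [cells, h]
    simp
  ext T
  constructor
  · intro hT
    funext c
    exact hT.1 c (by rw [hcells]; simp)
  · intro hT
    rw [Set.mem_singleton_iff] at hT
    subst hT
    refine ⟨fun c _ => rfl, ?_, ?_, ?_⟩
    · rw [hcells, h]
      simp only [Finset.coe_empty]
      rw [Set.Icc_eq_empty (by omega)]
      exact Set.bijOn_empty _
    · intro c hc; rw [hcells] at hc; simp at hc
    · intro c hc; rw [hcells] at hc; simp at hc

lemma dimM_of_sum_zero (h : P.sum = 0) : dimM P = 1 := by
  rw [dimM, syts_sum_zero h, Set.ncard_singleton]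

lemma mem_sytsFinset {T : (ℕ × ℕ) → ℕ} : T ∈ (syts_finite P).toFinset ↔ IsSYT P T := by
  rw [Set.Finite.mem_toFinset]; rfl

lemma dimM_eq_card : dimM P = (syts_finite P).toFinset.card :=
  Set.ncard_eq_toFinset_card _ (syts_finite P)

lemma block_card (hP : Pos P) (ha : a ∈ P) :
    ((syts_finite P).toFinset.filter (fun T => T (corner P a) = P.sum)).card =
      dimM (subParts P a) := by
  rw [dimM_eq_card]
  apply Finset.card_bij (fun T _ => delT P T)
  · intro T hT
    rw [Finset.mem_filter] at hT
    exact mem_sytsFinset.mpr (delT_mem hP ha (mem_sytsFinset.mp hT.1) hT.2)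
  · intro T hT U hU h
    rw [Finset.mem_filter] at hT hU
    rw [← insT_delT hP ha (mem_sytsFinset.mp hT.1) hT.2, h,
      insT_delT hP ha (mem_sytsFinset.mp hU.1) hU.2]
  · intro T' hT'
    have hT'' := mem_sytsFinset.mp hT'
    refine ⟨insT P a T', ?_, delT_insT hP ha hT''⟩
    rw [Finset.mem_filter]
    exact ⟨mem_sytsFinset.mpr (insT_mem hP ha hT''), insT_corner T'⟩

lemma filter_aOf_eq_block (hP : Pos P) (ha : a ∈ P) :
    (syts_finite P).toFinset.filter (fun T => aOf P T = a) =
      (syts_finite P).toFinset.filter (fun T => T (corner P a) = P.sum) := by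
  have hm : 1 ≤ P.sum := sum_pos_of_mem hP ha
  ext T
  simp only [Finset.mem_filter, mem_sytsFinset]
  constructor
  · rintro ⟨hT, rfl⟩
    exact ⟨hT, (aOf_spec hP hm hT).2⟩
  · rintro ⟨hT, hc⟩
    exact ⟨hT, aOf_eq hP ha hT hc⟩

lemma dimM_eq_sum_blocks (hP : Pos P) (hm : 1 ≤ P.sum) :
    dimM P = ∑ a ∈ P.toFinset, dimM (subParts P a) := by
  rw [dimM_eq_card]
  rw [Finset.card_eq_sum_card_fiberwise
    (f := fun T => aOf P T) (t := P.toFinset) ?_]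
  · apply Finset.sum_congr rfl
    intro a ha
    rw [filter_aOf_eq_block hP (Multiset.mem_toFinset.mp ha),
      block_card hP (Multiset.mem_toFinset.mp ha)]
  · intro T hT
    exact Multiset.mem_toFinset.mpr (aOf_spec hP hm (mem_sytsFinset.mp hT)).1

lemma dimM_pos_aux : ∀ (n : ℕ) (P : Multiset ℕ), P.sum = n → Pos P → 0 < dimM P := by
  intro n
  induction n using Nat.strong_induction_on with
  | _ n ih =>
    intro P hn hP
    rcases Nat.eq_zero_or_pos n with h0 | h1
    · rw [dimM_of_sum_zero (by omega)]; omega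
    · have hP0 : P ≠ 0 := by
        intro h; rw [h] at hn; simp at hn; omega
      obtain ⟨a, ha⟩ := Multiset.exists_mem_of_ne_zero hP0
      rw [dimM_eq_sum_blocks hP (by omega)]
      have haf : a ∈ P.toFinset := Multiset.mem_toFinset.mpr ha
      have hpos : 0 < dimM (subParts P a) := by
        apply ih (n - 1) (by omega)
        · rw [sum_subParts hP ha]; omega
        · exact pos_subParts hP ha
      calc 0 < dimM (subParts P a) := hpos
        _ ≤ ∑ a ∈ P.toFinset, dimM (subParts P a) :=
          Finset.single_le_sum (f := fun a => dimM (subParts P a))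
            (fun _ _ => Nat.zero_le _) haf

lemma dimM_pos (hP : Pos P) : 0 < dimM P := dimM_pos_aux P.sum P rfl hP

end Dims

section Gens

/-- adjacent transpositions within `{1, …, t}` -/
def adjGens (t : ℕ) : Set (Equiv.Perm ℕ) :=
  {τ | ∃ k, 1 ≤ k ∧ k + 1 ≤ t ∧ τ = Equiv.swap k (k + 1)}

lemma suppIn_mono {σ : Equiv.Perm ℕ} {t t' : ℕ} (h : SuppIn σ t) (htt : t ≤ t') :
    SuppIn σ t' := fun x hx => by have := h x hx; omega

lemma suppIn_one (t : ℕ) : SuppIn 1 t := fun x hx => absurd rfl hx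

lemma suppIn_mul {σ τ : Equiv.Perm ℕ} {t : ℕ} (hσ : SuppIn σ t) (hτ : SuppIn τ t) :
    SuppIn (σ * τ) t := by
  intro x hx
  by_cases h : τ x = x
  · refine hσ x ?_
    simpa [Equiv.Perm.mul_apply, h] using hx
  · exact hτ x h

lemma suppIn_swap {k t : ℕ} (h1 : 1 ≤ k) (h2 : k + 1 ≤ t) :
    SuppIn (Equiv.swap k (k + 1)) t := by
  intro x hx
  rcases (Equiv.swap_apply_ne_self_iff.mp hx).2 with h | h <;> omega

lemma suppIn_closure {σ : Equiv.Perm ℕ} {t : ℕ}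
    (h : σ ∈ Submonoid.closure (adjGens t)) : SuppIn σ t := by
  induction h using Submonoid.closure_induction with
  | mem τ hτ =>
    obtain ⟨k, hk1, hk2, rfl⟩ := hτ
    exact suppIn_swap hk1 hk2
  | one => exact suppIn_one t
  | mul σ τ _ _ ihσ ihτ => exact suppIn_mul ihσ ihτ

lemma adjGens_mono {t t' : ℕ} (h : t ≤ t') : adjGens t ⊆ adjGens t' := by
  rintro τ ⟨k, h1, h2, rfl⟩
  exact ⟨k, h1, by omega, rfl⟩

lemma moved_of_apply_ne {σ : Equiv.Perm ℕ} {x : ℕ} (h : σ x ≠ x) : σ (σ x) ≠ σ x :=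
  fun hc => h (σ.injective hc)

lemma inv_moved {σ : Equiv.Perm ℕ} {x : ℕ} (h : σ x ≠ x) : σ⁻¹ x ≠ x := by
  intro hc
  apply h
  conv_lhs => rw [← hc]
  simp

lemma mem_closure_of_suppIn : ∀ (t : ℕ) (σ : Equiv.Perm ℕ), SuppIn σ t →
    σ ∈ Submonoid.closure (adjGens t) := by
  intro t
  induction t with
  | zero =>
    intro σ hσ
    have : σ = 1 := by
      ext x
      by_contra h
      have := hσ x (by simpa using h)
      omega
    rw [this]
    exact Submonoid.one_mem _
  | succ t ih =>
    -- auxiliary induction on the distance of σ⁻¹ (t+1) from t+1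
    suffices haux : ∀ (d : ℕ) (σ : Equiv.Perm ℕ), SuppIn σ (t + 1) →
        t + 1 - σ⁻¹ (t + 1) ≤ d → σ ∈ Submonoid.closure (adjGens (t + 1)) by
      intro σ hσ
      exact haux (t + 1) σ hσ (by omega)
    intro d
    induction d with
    | zero =>
      intro σ hσ hd
      have hfix : σ (t + 1) = t + 1 := by
        by_contra h
        have h1 : σ⁻¹ (t + 1) ≠ t + 1 := inv_moved h
        have h2 : σ (σ⁻¹ (t + 1)) ≠ σ⁻¹ (t + 1) := by
          rw [← Equiv.Perm.mul_apply, mul_inv_cancel, Equiv.Perm.one_apply]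
          exact Ne.symm h1
        have h3 := hσ _ h2
        omega
      have hsupp : SuppIn σ t := by
        intro x hx
        have h1 := hσ x hx
        have h2 : x ≠ t + 1 := fun hc => hx (hc ▸ hfix)
        omega
      exact Submonoid.closure_mono (adjGens_mono (by omega)) (ih σ hsupp)
    | succ d ihd =>
      intro σ hσ hd
      by_cases hfix : σ (t + 1) = t + 1
      · have hsupp : SuppIn σ t := by
          intro x hx
          have h1 := hσ x hx
          have h2 : x ≠ t + 1 := fun hc => hx (hc ▸ hfix)
          omega
        exact Submonoid.closure_mono (adjGens_mono (by omega)) (ih σ hsupp)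
      · set j := σ⁻¹ (t + 1) with hj
        have hjm : σ j ≠ j := by
          rw [hj, ← Equiv.Perm.mul_apply, mul_inv_cancel, Equiv.Perm.one_apply]
          exact Ne.symm (inv_moved hfix)
        have hjb := hσ j hjm
        have hjne : j ≠ t + 1 := by
          rw [hj]; exact inv_moved hfix
        have hjt : j ≤ t := by omega
        have hgen : Equiv.swap j (j + 1) ∈ adjGens (t + 1) := ⟨j, by omega, by omega, rfl⟩
        set σ2 := σ * Equiv.swap j (j + 1) with hσ2
        have hσ2s : SuppIn σ2 (t + 1) :=
          suppIn_mul hσ (suppIn_swap (by omega) (by omega))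
        have hσ2inv : σ2⁻¹ (t + 1) = j + 1 := by
          rw [hσ2, mul_inv_rev]
          simp only [Equiv.Perm.mul_apply, ← hj]
          rw [Equiv.swap_inv, Equiv.swap_apply_left]
        have hmem2 : σ2 ∈ Submonoid.closure (adjGens (t + 1)) := by
          apply ihd σ2 hσ2s
          rw [hσ2inv]
          omega
        have : σ = σ2 * Equiv.swap j (j + 1) := by
          rw [hσ2, mul_assoc]
          simp
        rw [this]
        exact Submonoid.mul_mem _ hmem2 (Submonoid.subset_closure hgen)

end Gens

section RepRestrict

variable {P : Multiset ℕ} {a : ℕ} {T U : (ℕ × ℕ) → ℕ}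

lemma eq_corner_of_max (hP : Pos P) (ha : a ∈ P) (hT : IsSYT P T)
    (hcor : T (corner P a) = P.sum) {c : ℕ × ℕ} (hc : T c = P.sum) : c = corner P a := by
  by_cases hmem : c ∈ cells P
  · exact hT.2.1.injOn (Finset.mem_coe.mpr hmem)
      (Finset.mem_coe.mpr (corner_mem_cells hP ha)) (hc.trans hcor.symm)
  · rw [hT.1 c hmem] at hc
    have := sum_pos_of_mem hP ha
    omega

lemma contentOf_delT (hP : Pos P) (ha : a ∈ P) (hT : IsSYT P T)
    (hcor : T (corner P a) = P.sum) {k : ℕ} (hk1 : 1 ≤ k) (hk2 : k ≤ P.sum - 1) :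
    contentOf (subParts P a) (delT P T) k = contentOf P T k := by
  have hm : 1 ≤ P.sum := sum_pos_of_mem hP ha
  rw [contentOf, contentOf]
  congr 1
  ext c
  rw [cells_subParts hP ha]
  simp only [Finset.mem_filter, Finset.mem_erase]
  constructor
  · rintro ⟨⟨hne, hcP⟩, hval⟩
    rw [delT] at hval
    by_cases h : T c = P.sum
    · rw [if_pos h] at hval; omega
    · rw [if_neg h] at hval; exact ⟨hcP, hval⟩
  · rintro ⟨hcP, hval⟩
    have hne : T c ≠ P.sum := by omega
    have hnec : c ≠ corner P a := by
      intro h; rw [h, hcor] at hval; omega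
    exact ⟨⟨hnec, hcP⟩, by rw [delT, if_neg hne]; exact hval⟩

lemma dk_delT (hP : Pos P) (ha : a ∈ P) (hT : IsSYT P T)
    (hcor : T (corner P a) = P.sum) {k : ℕ} (hk1 : 1 ≤ k) (hk2 : k + 1 ≤ P.sum - 1) :
    dk (subParts P a) (delT P T) k = dk P T k := by
  rw [dk, dk, contentOf_delT hP ha hT hcor hk1 (by omega),
    contentOf_delT hP ha hT hcor (by omega) (by omega)]

lemma delT_swapT (hP : Pos P) (ha : a ∈ P) {k : ℕ} (hk1 : 1 ≤ k) (hk2 : k + 1 ≤ P.sum - 1) :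
    delT P (swapT T k) = swapT (delT P T) k := by
  have hm : 1 ≤ P.sum := sum_pos_of_mem hP ha
  funext c
  simp only [delT, swapT]
  by_cases h1 : T c = k
  · simp [h1, show ¬ (k = P.sum) by omega, show ¬ (k + 1 = P.sum) by omega]
  · by_cases h2 : T c = k + 1
    · simp [h1, h2, show ¬ (k = P.sum) by omega, show ¬ (k + 1 = P.sum) by omega]
    · by_cases h3 : T c = P.sum
      · simp [h1, h2, h3, show ¬ ((0:ℕ) = k) by omega, show ¬ ((0:ℕ) = k + 1) by omega,
          show ¬ (P.sum = k) by omega, show ¬ (P.sum = k + 1) by omega]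
      · simp [h1, h2, h3]

lemma swapT_corner (hcor : T (corner P a) = P.sum) {k : ℕ} (hk2 : k + 1 ≤ P.sum - 1) :
    swapT T k (corner P a) = P.sum := by
  rw [swapT, hcor, if_neg (by omega), if_neg (by omega)]

lemma insT_swapT (hP : Pos P) (ha : a ∈ P) (hT : IsSYT P T)
    (hcor : T (corner P a) = P.sum) {k : ℕ} (hk1 : 1 ≤ k) (hk2 : k + 1 ≤ P.sum - 1) :
    insT P a (swapT (delT P T) k) = swapT T k := by
  have hm : 1 ≤ P.sum := sum_pos_of_mem hP ha
  funext c
  by_cases h : c = corner P a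
  · rw [h, insT_corner, swapT_corner hcor hk2]
  · rw [insT, if_neg h]
    have hne : T c ≠ P.sum := fun hc => h (eq_corner_of_max hP ha hT hcor hc)
    simp only [swapT, delT, if_neg hne]

end RepRestrict

section RepRestrict2

variable {P : Multiset ℕ}

lemma mem_SYTs_iff {T : (ℕ × ℕ) → ℕ} : T ∈ SYTs P ↔ IsSYT P T := Iff.rfl

lemma rep_restrict (S : SNSystem) (hP : Pos P) {σ : Equiv.Perm ℕ}
    (hσ : σ ∈ Submonoid.closure (adjGens (P.sum - 1))) :
    ∀ a ∈ P, ∀ T ∈ SYTs P, ∀ U ∈ SYTs P, T (corner P a) = P.sum →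
      (U (corner P a) = P.sum →
        S.rep P σ T U = S.rep (subParts P a) σ (delT P T) (delT P U)) ∧
      (U (corner P a) ≠ P.sum → S.rep P σ T U = 0) := by
  induction hσ using Submonoid.closure_induction with
  | mem τ hτ =>
    obtain ⟨k, hk1, hk2, rfl⟩ := hτ
    intro a ha T hT U hU hcorT
    have hm : 1 ≤ P.sum := sum_pos_of_mem hP ha
    have hsumQ : (subParts P a).sum = P.sum - 1 := sum_subParts hP ha
    have hTQ : IsSYT (subParts P a) (delT P T) := delT_mem hP ha hT hcorT
    have hrepP := (S.rep_spec P).2.2 k hk1 (by omega) T hT U hU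
    constructor
    · intro hcorU
      have hUQ : IsSYT (subParts P a) (delT P U) := delT_mem hP ha hU hcorU
      have hrepQ := (S.rep_spec (subParts P a)).2.2 k hk1 (by omega) _ hTQ _ hUQ
      rw [hrepP, hrepQ]
      have hdk := dk_delT hP ha hT hcorT hk1 hk2
      by_cases hTU : T = U
      · rw [if_pos hTU, if_pos (by rw [hTU]), hdk]
      · have hTU' : delT P T ≠ delT P U := by
          intro h
          apply hTU
          rw [← insT_delT hP ha hT hcorT, h, insT_delT hP ha hU hcorU]
        rw [if_neg hTU, if_neg hTU']
        by_cases hsw : U = swapT T k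
        · have hsw' : delT P U = swapT (delT P T) k := by
            rw [hsw, delT_swapT hP ha hk1 hk2]
          rw [if_pos hsw, if_pos hsw', hdk]
        · have hsw' : delT P U ≠ swapT (delT P T) k := by
            intro h
            apply hsw
            rw [← insT_delT hP ha hU hcorU, h, insT_swapT hP ha hT hcorT hk1 hk2]
          rw [if_neg hsw, if_neg hsw']
    · intro hcorU
      have hTU : T ≠ U := fun h => hcorU (by rw [← h]; exact hcorT)
      have hsw : U ≠ swapT T k := by
        intro h
        apply hcorU
        rw [h]
        exact swapT_corner hcorT hk2
      rw [hrepP, if_neg (fun h => hTU h), if_neg hsw]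
  | one =>
    intro a ha T hT U hU hcorT
    have hm : 1 ≤ P.sum := sum_pos_of_mem hP ha
    have hTQ : IsSYT (subParts P a) (delT P T) := delT_mem hP ha hT hcorT
    have hrepP := (S.rep_spec P).1 T hT U hU
    constructor
    · intro hcorU
      have hUQ : IsSYT (subParts P a) (delT P U) := delT_mem hP ha hU hcorU
      have hrepQ := (S.rep_spec (subParts P a)).1 _ hTQ _ hUQ
      rw [hrepP, hrepQ]
      by_cases hTU : T = U
      · rw [if_pos hTU, if_pos (by rw [hTU])]
      · have hTU' : delT P T ≠ delT P U := by
          intro h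
          apply hTU
          rw [← insT_delT hP ha hT hcorT, h, insT_delT hP ha hU hcorU]
        rw [if_neg hTU, if_neg hTU']
    · intro hcorU
      have hTU : T ≠ U := fun h => hcorU (by rw [← h]; exact hcorT)
      rw [hrepP, if_neg hTU]
  | mul σ τ hσm hτm ihσ ihτ =>
    intro a ha T hT U hU hcorT
    have hm : 1 ≤ P.sum := sum_pos_of_mem hP ha
    have hsumQ : (subParts P a).sum = P.sum - 1 := sum_subParts hP ha
    have hσs : SuppIn σ (P.sum - 1) := suppIn_closure hσm
    have hτs : SuppIn τ (P.sum - 1) := suppIn_closure hτm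
    have hTQ : IsSYT (subParts P a) (delT P T) := delT_mem hP ha hT hcorT
    have hmulP := (S.rep_spec P).2.1 σ τ (suppIn_mono hσs (by omega))
      (suppIn_mono hτs (by omega)) T hT U hU
    have hsum1 : S.rep P (σ * τ) T U =
        ∑ V ∈ (syts_finite P).toFinset, S.rep P σ T V * S.rep P τ V U := by
      rw [hmulP, finsum_mem_eq_finite_toFinset_sum _ (syts_finite P)]
    have hsum2 : ∑ V ∈ (syts_finite P).toFinset, S.rep P σ T V * S.rep P τ V U =
        ∑ V ∈ (syts_finite P).toFinset.filter (fun V => V (corner P a) = P.sum),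
          S.rep P σ T V * S.rep P τ V U := by
      symm
      apply Finset.sum_filter_of_ne
      intro V hV hne
      by_contra hc
      have := (ihσ a ha T hT V (mem_sytsFinset.mp hV) hcorT).2 hc
      rw [this, zero_mul] at hne
      exact hne rfl
    have hbij : ∑ V ∈ (syts_finite P).toFinset.filter (fun V => V (corner P a) = P.sum),
          S.rep P σ T V * S.rep P τ V U =
        ∑ V' ∈ (syts_finite (subParts P a)).toFinset,
          S.rep (subParts P a) σ (delT P T) V' * S.rep P τ (insT P a V') U := by
      apply Finset.sum_bij (fun V _ => delT P V)
      · intro V hV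
        rw [Finset.mem_filter] at hV
        exact mem_sytsFinset.mpr (delT_mem hP ha (mem_sytsFinset.mp hV.1) hV.2)
      · intro V hV W hW h
        rw [Finset.mem_filter] at hV hW
        rw [← insT_delT hP ha (mem_sytsFinset.mp hV.1) hV.2, h,
          insT_delT hP ha (mem_sytsFinset.mp hW.1) hW.2]
      · intro V' hV'
        have hV'' := mem_sytsFinset.mp hV'
        refine ⟨insT P a V', ?_, delT_insT hP ha hV''⟩
        rw [Finset.mem_filter]
        exact ⟨mem_sytsFinset.mpr (insT_mem hP ha hV''), insT_corner V'⟩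
      · intro V hV
        rw [Finset.mem_filter] at hV
        have hVs := mem_sytsFinset.mp hV.1
        have h1 := (ihσ a ha T hT V hVs hcorT).1 hV.2
        rw [h1, insT_delT hP ha hVs hV.2]
    constructor
    · intro hcorU
      have hUQ : IsSYT (subParts P a) (delT P U) := delT_mem hP ha hU hcorU
      have hmulQ := (S.rep_spec (subParts P a)).2.1 σ τ (by rw [hsumQ]; exact hσs)
        (by rw [hsumQ]; exact hτs) _ hTQ _ hUQ
      rw [hsum1, hsum2, hbij, hmulQ,
        finsum_mem_eq_finite_toFinset_sum _ (syts_finite (subParts P a))]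
      apply Finset.sum_congr rfl
      intro V' hV'
      have hV'' := mem_sytsFinset.mp hV'
      have hins : IsSYT P (insT P a V') := insT_mem hP ha hV''
      have h2 := (ihτ a ha (insT P a V') hins U hU (insT_corner V')).1 hcorU
      rw [h2, delT_insT hP ha hV'']
    · intro hcorU
      rw [hsum1, hsum2, hbij]
      apply Finset.sum_eq_zero
      intro V' hV'
      have hV'' := mem_sytsFinset.mp hV'
      have hins : IsSYT P (insT P a V') := insT_mem hP ha hV''
      have h2 := (ihτ a ha (insT P a V') hins U hU (insT_corner V')).2 hcorU
      rw [h2, mul_zero]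

end RepRestrict2

section EnumOrder

variable {P : Multiset ℕ} {a a' : ℕ} {T U : (ℕ × ℕ) → ℕ}

lemma LLBefore_asymm (h1 : LLBefore P T U) (h2 : LLBefore P U T) : False := by
  obtain ⟨hne, k, hk, hall⟩ := h1
  obtain ⟨hne', k', hk', hall'⟩ := h2
  rcases Nat.lt_trichotomy k k' with h | h | h
  · have := hall k' h; omega
  · subst h; omega
  · have := hall' k h; omega

lemma LLBefore_of_corner_lt (hP : Pos P) (hT : IsSYT P T) (hU : IsSYT P U)
    (haT : a ∈ P) (haU : a' ∈ P) (hcT : T (corner P a) = P.sum)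
    (hcU : U (corner P a') = P.sum) (h : a < a') : LLBefore P T U := by
  have hm : 1 ≤ P.sum := sum_pos_of_mem hP haT
  have hrT : rowOf P T P.sum = cRow P a :=
    rowOf_max hT (corner_mem_cells hP haT) hcT hm
  have hrU : rowOf P U P.sum = cRow P a' :=
    rowOf_max hU (corner_mem_cells hP haU) hcU hm
  have hlt : rCount P a' < rCount P a := rCount_lt_of_mem haT h
  have hposT := rCount_pos_of_mem haT
  have hposU := rCount_pos_of_mem haU
  have hrow : rowOf P U P.sum < rowOf P T P.sum := by
    rw [hrT, hrU, cRow, cRow]; omega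
  refine ⟨?_, P.sum, hrow, ?_⟩
  · intro heq
    rw [heq, hrU] at hrT
    simp only [cRow] at hrT
    omega
  · intro k hk
    rw [rowOf_eq_zero_of_gt hT hk, rowOf_eq_zero_of_gt hU hk]

lemma rowOf_delT (hP : Pos P) (ha : a ∈ P) (hT : IsSYT P T)
    (hcT : T (corner P a) = P.sum) {k : ℕ} (hk : k ≠ P.sum) :
    rowOf (subParts P a) (delT P T) k = rowOf P T k := by
  have hm : 1 ≤ P.sum := sum_pos_of_mem hP ha
  rw [rowOf, rowOf]
  congr 1
  ext c
  rw [cells_subParts hP ha]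
  simp only [Finset.mem_filter, Finset.mem_erase]
  constructor
  · rintro ⟨⟨hne, hcP⟩, hval⟩
    have hTne : T c ≠ P.sum := by
      intro hc
      exact hne (eq_corner_of_max hP ha hT hcT hc)
    rw [delT, if_neg hTne] at hval
    exact ⟨hcP, hval⟩
  · rintro ⟨hcP, hval⟩
    have hTne : T c ≠ P.sum := by omega
    have hnec : c ≠ corner P a := by
      intro h; rw [h, hcT] at hval; omega
    exact ⟨⟨hnec, hcP⟩, by rw [delT, if_neg hTne]; exact hval⟩

lemma rowOf_delT_max (hP : Pos P) (ha : a ∈ P) (hT : IsSYT P T)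
    (hcT : T (corner P a) = P.sum) :
    rowOf (subParts P a) (delT P T) P.sum = 0 := by
  rw [rowOf]
  apply Finset.sum_eq_zero
  intro c hc
  exfalso
  rw [Finset.mem_filter, cells_subParts hP ha, Finset.mem_erase] at hc
  obtain ⟨⟨hne, hcP⟩, hval⟩ := hc
  have hTne : T c ≠ P.sum := fun h => hne (eq_corner_of_max hP ha hT hcT h)
  rw [delT, if_neg hTne] at hval
  exact hTne hval

lemma LLBefore_delT (hP : Pos P) (ha : a ∈ P) (hT : IsSYT P T) (hU : IsSYT P U)
    (hcT : T (corner P a) = P.sum) (hcU : U (corner P a) = P.sum)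
    (h : LLBefore P T U) : LLBefore (subParts P a) (delT P T) (delT P U) := by
  obtain ⟨hne, k, hk, hall⟩ := h
  have hm : 1 ≤ P.sum := sum_pos_of_mem hP ha
  have hkm : k ≠ P.sum := by
    intro hkm
    subst hkm
    have h1 : rowOf P T P.sum = cRow P a := rowOf_max hT (corner_mem_cells hP ha) hcT hm
    have h2 : rowOf P U P.sum = cRow P a := rowOf_max hU (corner_mem_cells hP ha) hcU hm
    omega
  refine ⟨?_, k, ?_, ?_⟩
  · intro heq
    apply hne
    rw [← insT_delT hP ha hT hcT, heq, insT_delT hP ha hU hcU]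
  · rw [rowOf_delT hP ha hT hcT hkm, rowOf_delT hP ha hU hcU hkm]
    exact hk
  · intro k' hk'
    by_cases hk'm : k' = P.sum
    · rw [hk'm, rowOf_delT_max hP ha hT hcT, rowOf_delT_max hP ha hU hcU]
    · rw [rowOf_delT hP ha hT hcT hk'm, rowOf_delT hP ha hU hcU hk'm]
      exact hall k' hk'

lemma strictMono_fin_le {N : ℕ} {g : Fin N → Fin N} (hg : StrictMono g) :
    ∀ i : Fin N, (i : ℕ) ≤ (g i : ℕ) := by
  have key : ∀ n (i : Fin N), (i : ℕ) = n → n ≤ (g i : ℕ) := by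
    intro n
    induction n with
    | zero => intro i _; omega
    | succ n ih =>
      intro i hi
      have hn : n < N := by have := i.isLt; omega
      have hjlt : (⟨n, hn⟩ : Fin N) < i := by
        rw [Fin.lt_def]; simp; omega
      have h1 := hg hjlt
      have h2 := ih ⟨n, hn⟩ rfl
      rw [Fin.lt_def] at h1
      omega
  intro i
  exact key (i : ℕ) i rfl

lemma range_enum (S : SNSystem) (P : Multiset ℕ) :
    Set.range (S.enum P) = SYTs P := by
  apply Set.eq_of_subset_of_ncard_le
  · rintro _ ⟨i, rfl⟩
    exact (S.enum_spec P).1 i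
  · have h1 : Set.range (S.enum P) = (S.enum P) '' Set.univ := (Set.image_univ).symm
    rw [h1, Set.ncard_image_of_injective _ (S.enum_spec P).2.1, Set.ncard_univ]
    simp [dimM]
  · exact syts_finite P

lemma enum_surjective (S : SNSystem) (P : Multiset ℕ) {T : (ℕ × ℕ) → ℕ}
    (hT : T ∈ SYTs P) : ∃ i, S.enum P i = T := by
  rw [← range_enum S P] at hT
  exact hT

lemma llEnum_unique (S : SNSystem) {P : Multiset ℕ} {f : Fin (dimM P) → (ℕ × ℕ) → ℕ}
    (hf : IsLLEnum P f) : f = S.enum P := by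
  obtain ⟨hfm, hfi, hfo⟩ := hf
  obtain ⟨hem, hei, heo⟩ := S.enum_spec P
  -- surjectivity of f
  have hfr : Set.range f = SYTs P := by
    apply Set.eq_of_subset_of_ncard_le
    · rintro _ ⟨i, rfl⟩; exact hfm i
    · have h1 : Set.range f = f '' Set.univ := (Set.image_univ).symm
      rw [h1, Set.ncard_image_of_injective _ hfi, Set.ncard_univ]
      simp [dimM]
    · exact syts_finite P
  have hfs : ∀ T ∈ SYTs P, ∃ i, f i = T := by
    intro T hT; rw [← hfr] at hT; exact hT
  -- index translations
  have hg : ∀ i, ∃ j, S.enum P j = f i := fun i => enum_surjective S P (hfm i)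
  have hh : ∀ i, ∃ j, f j = S.enum P i := fun i => hfs _ (hem i)
  choose g hgs using hg
  choose h hhs using hh
  have hgmono : StrictMono g := by
    intro i j hij
    have hne : g i ≠ g j := by
      intro heq
      have : f i = f j := by rw [← hgs i, ← hgs j, heq]
      exact absurd (hfi this) (Nat.ne_of_lt (Fin.lt_def.mp hij) ∘ congrArg Fin.val)
    rcases lt_or_gt_of_ne hne with h1 | h1
    · exact h1
    · exfalso
      have hllf := hfo i j hij
      have hlle := heo (g j) (g i) h1
      rw [hgs i, hgs j] at hlle
      exact LLBefore_asymm hllf hlle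
  have hhmono : StrictMono h := by
    intro i j hij
    have hne : h i ≠ h j := by
      intro heq
      have : S.enum P i = S.enum P j := by rw [← hhs i, ← hhs j, heq]
      exact absurd (hei this) (Nat.ne_of_lt (Fin.lt_def.mp hij) ∘ congrArg Fin.val)
    rcases lt_or_gt_of_ne hne with h1 | h1
    · exact h1
    · exfalso
      have hlle := heo i j hij
      have hllf := hfo (h j) (h i) h1
      rw [hhs i, hhs j] at hllf
      exact LLBefore_asymm hllf hlle
  have hgh : ∀ i, g (h i) = i := by
    intro i
    apply hei
    rw [hgs (h i), hhs i]
  have hid : ∀ i, h i = i := by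
    intro i
    have h1 := strictMono_fin_le hgmono (h i)
    have h2 := strictMono_fin_le hhmono i
    rw [hgh i] at h1
    exact Fin.le_antisymm (by omega) (by omega)
  funext i
  rw [← hhs i, hid i]

lemma lowerset_char {N : ℕ} (s : Finset (Fin N))
    (hs : ∀ i j : Fin N, j ≤ i → i ∈ s → j ∈ s) (i : Fin N) :
    i ∈ s ↔ (i : ℕ) < s.card := by
  constructor
  · intro hi
    have hsub : Finset.Iic i ⊆ s := fun j hj => hs i j (Finset.mem_Iic.mp hj) hi
    have := Finset.card_le_card hsub
    rw [Fin.card_Iic] at this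
    omega
  · intro hi
    by_contra hc
    have hsub : s ⊆ Finset.Iio i := by
      intro j hj
      rw [Finset.mem_Iio]
      rcases lt_or_ge j i with h | h
      · exact h
      · exact absurd (hs j i h hj) hc
    have := Finset.card_le_card hsub
    rw [Fin.card_Iio] at this
    omega

end EnumOrder

section Blocks

variable {P : Multiset ℕ} {a : ℕ}

/-- corner value of the `i`-th tableau in the enumeration -/
noncomputable def AIdx (S : SNSystem) (P : Multiset ℕ) (i : Fin (dimM P)) : ℕ :=
  aOf P (S.enum P i)

lemma AIdx_spec (S : SNSystem) (hP : Pos P) (hm : 1 ≤ P.sum) (i : Fin (dimM P)) :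
    AIdx S P i ∈ P ∧ (S.enum P i) (corner P (AIdx S P i)) = P.sum :=
  aOf_spec hP hm ((S.enum_spec P).1 i)

lemma AIdx_mono (S : SNSystem) (hP : Pos P) (hm : 1 ≤ P.sum) :
    Monotone (AIdx S P) := by
  intro i j hij
  rcases eq_or_lt_of_le hij with h | h
  · rw [h]
  · by_contra hc
    push_neg at hc
    have h1 := (S.enum_spec P).2.2 i j h
    have h2 := LLBefore_of_corner_lt hP ((S.enum_spec P).1 j) ((S.enum_spec P).1 i)
      (AIdx_spec S hP hm j).1 (AIdx_spec S hP hm i).1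
      (AIdx_spec S hP hm j).2 (AIdx_spec S hP hm i).2 hc
    exact LLBefore_asymm h1 h2

lemma block_card_enum (S : SNSystem) (hP : Pos P) (ha : a ∈ P) :
    (Finset.univ.filter (fun i : Fin (dimM P) => AIdx S P i = a)).card =
      dimM (subParts P a) := by
  have hm : 1 ≤ P.sum := sum_pos_of_mem hP ha
  rw [dimM_eq_card (P := subParts P a)]
  apply Finset.card_bij (fun i _ => delT P (S.enum P i))
  · intro i hi
    rw [Finset.mem_filter] at hi
    have hc := (AIdx_spec S hP hm i).2
    rw [hi.2] at hc
    exact mem_sytsFinset.mpr (delT_mem hP ha ((S.enum_spec P).1 i) hc)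
  · intro i hi j hj h
    rw [Finset.mem_filter] at hi hj
    have hci := (AIdx_spec S hP hm i).2
    rw [hi.2] at hci
    have hcj := (AIdx_spec S hP hm j).2
    rw [hj.2] at hcj
    have : S.enum P i = S.enum P j := by
      rw [← insT_delT hP ha ((S.enum_spec P).1 i) hci, h,
        insT_delT hP ha ((S.enum_spec P).1 j) hcj]
    exact (S.enum_spec P).2.1 this
  · intro T' hT'
    have hT'' := mem_sytsFinset.mp hT'
    obtain ⟨i, hi⟩ := enum_surjective S P (T := insT P a T') (insT_mem hP ha hT'')
    have hA : AIdx S P i = a := by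
      rw [AIdx, hi]
      exact aOf_eq hP ha (insT_mem hP ha hT'') (insT_corner T')
    refine ⟨i, Finset.mem_filter.mpr ⟨Finset.mem_univ i, hA⟩, ?_⟩
    rw [hi, delT_insT hP ha hT'']

lemma card_Lset_add (S : SNSystem) (hP : Pos P) (ha : a ∈ P) :
    (Finset.univ.filter (fun i : Fin (dimM P) => AIdx S P i ≤ a)).card =
      (Finset.univ.filter (fun i : Fin (dimM P) => AIdx S P i < a)).card +
        dimM (subParts P a) := by
  rw [← block_card_enum S hP ha]
  rw [← Finset.card_union_of_disjoint ?_]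
  · congr 1
    ext i
    simp only [Finset.mem_filter, Finset.mem_union, Finset.mem_univ, true_and]
    omega
  · rw [Finset.disjoint_left]
    intro i hi1 hi2
    rw [Finset.mem_filter] at hi1 hi2
    omega

lemma AIdx_lt_iff (S : SNSystem) (hP : Pos P) (hm : 1 ≤ P.sum) (a : ℕ) (i : Fin (dimM P)) :
    AIdx S P i < a ↔
      (i : ℕ) < (Finset.univ.filter (fun i : Fin (dimM P) => AIdx S P i < a)).card := by
  have h := lowerset_char (Finset.univ.filter (fun i : Fin (dimM P) => AIdx S P i < a))
    (fun i j hji hi => by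
      rw [Finset.mem_filter] at hi ⊢
      exact ⟨Finset.mem_univ j, lt_of_le_of_lt (AIdx_mono S hP hm hji) hi.2⟩) i
  rw [← h, Finset.mem_filter]
  simp

lemma AIdx_le_iff (S : SNSystem) (hP : Pos P) (hm : 1 ≤ P.sum) (a : ℕ) (i : Fin (dimM P)) :
    AIdx S P i ≤ a ↔
      (i : ℕ) < (Finset.univ.filter (fun i : Fin (dimM P) => AIdx S P i ≤ a)).card := by
  have h := lowerset_char (Finset.univ.filter (fun i : Fin (dimM P) => AIdx S P i ≤ a))
    (fun i j hji hi => by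
      rw [Finset.mem_filter] at hi ⊢
      exact ⟨Finset.mem_univ j, le_trans (AIdx_mono S hP hm hji) hi.2⟩) i
  rw [← h, Finset.mem_filter]
  simp

lemma block_index_bound (S : SNSystem) (hP : Pos P) (ha : a ∈ P) :
    (Finset.univ.filter (fun i : Fin (dimM P) => AIdx S P i < a)).card +
      dimM (subParts P a) ≤ dimM P := by
  rw [← card_Lset_add S hP ha]
  calc (Finset.univ.filter (fun i : Fin (dimM P) => AIdx S P i ≤ a)).card
      ≤ (Finset.univ : Finset (Fin (dimM P))).card := Finset.card_filter_le _ _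
    _ = dimM P := by simp

lemma AIdx_eq_iff (S : SNSystem) (hP : Pos P) (ha : a ∈ P) (i : Fin (dimM P)) :
    AIdx S P i = a ↔
      (Finset.univ.filter (fun j : Fin (dimM P) => AIdx S P j < a)).card ≤ (i : ℕ) ∧
      (i : ℕ) < (Finset.univ.filter (fun j : Fin (dimM P) => AIdx S P j < a)).card +
        dimM (subParts P a) := by
  have hm : 1 ≤ P.sum := sum_pos_of_mem hP ha
  rw [← card_Lset_add S hP ha]
  have h1 := AIdx_lt_iff S hP hm a i
  have h2 := AIdx_le_iff S hP hm a i
  omega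

lemma enum_block (S : SNSystem) (hP : Pos P) (ha : a ∈ P)
    (j : Fin (dimM (subParts P a)))
    (h : (Finset.univ.filter (fun i : Fin (dimM P) => AIdx S P i < a)).card + (j : ℕ) <
      dimM P) :
    delT P (S.enum P
      ⟨(Finset.univ.filter (fun i : Fin (dimM P) => AIdx S P i < a)).card + (j : ℕ), h⟩) =
      S.enum (subParts P a) j := by
  have hm : 1 ≤ P.sum := sum_pos_of_mem hP ha
  set o := (Finset.univ.filter (fun i : Fin (dimM P) => AIdx S P i < a)).card with ho
  have hbound := block_index_bound S hP ha
  have hidx : ∀ j' : Fin (dimM (subParts P a)), o + (j' : ℕ) < dimM P := by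
    intro j'
    have := j'.isLt
    omega
  set f : Fin (dimM (subParts P a)) → (ℕ × ℕ) → ℕ :=
    fun j' => delT P (S.enum P ⟨o + (j' : ℕ), hidx j'⟩) with hfdef
  have hblock : ∀ j' : Fin (dimM (subParts P a)),
      AIdx S P ⟨o + (j' : ℕ), hidx j'⟩ = a := by
    intro j'
    rw [AIdx_eq_iff S hP ha]
    have := j'.isLt
    constructor <;> · simp only []; omega
  have hcornerv : ∀ j' : Fin (dimM (subParts P a)),
      (S.enum P ⟨o + (j' : ℕ), hidx j'⟩) (corner P a) = P.sum := by
    intro j'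
    have hc := (AIdx_spec S hP hm ⟨o + (j' : ℕ), hidx j'⟩).2
    rw [hblock j'] at hc
    exact hc
  have hf : IsLLEnum (subParts P a) f := by
    refine ⟨?_, ?_, ?_⟩
    · intro j'
      exact delT_mem hP ha ((S.enum_spec P).1 _) (hcornerv j')
    · intro j1 j2 heq
      rw [hfdef] at heq
      simp only at heq
      have : S.enum P ⟨o + (j1 : ℕ), hidx j1⟩ = S.enum P ⟨o + (j2 : ℕ), hidx j2⟩ := by
        rw [← insT_delT hP ha ((S.enum_spec P).1 _) (hcornerv j1), heq,
          insT_delT hP ha ((S.enum_spec P).1 _) (hcornerv j2)]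
      have := (S.enum_spec P).2.1 this
      have hval : o + (j1 : ℕ) = o + (j2 : ℕ) := congrArg Fin.val this
      exact Fin.ext (by omega)
    · intro j1 j2 hlt
      have hlt' : (⟨o + (j1 : ℕ), hidx j1⟩ : Fin (dimM P)) <
          ⟨o + (j2 : ℕ), hidx j2⟩ := by
        rw [Fin.lt_def]
        simp only
        have := Fin.lt_def.mp hlt
        omega
      have hLL := (S.enum_spec P).2.2 _ _ hlt'
      exact LLBefore_delT hP ha ((S.enum_spec P).1 _) ((S.enum_spec P).1 _)
        (hcornerv j1) (hcornerv j2) hLL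
  have := llEnum_unique S hf
  exact congrFun this j

lemma chiVal_eq_sum (S : SNSystem) (Q : Multiset ℕ) (σ : Equiv.Perm ℕ) :
    chiVal S Q σ = ∑ T ∈ (syts_finite Q).toFinset, S.rep Q σ T T := by
  rw [chiVal]
  apply Finset.sum_bij (fun (i : Fin (dimM Q)) (_ : i ∈ Finset.univ) => S.enum Q i)
  · intro i _
    exact mem_sytsFinset.mpr ((S.enum_spec Q).1 i)
  · intro i _ j _ h
    exact (S.enum_spec Q).2.1 h
  · intro T hT
    obtain ⟨i, hi⟩ := enum_surjective S Q (mem_sytsFinset.mp hT)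
    exact ⟨i, Finset.mem_univ i, hi⟩
  · intro i _
    rfl

end Blocks

section Step

lemma card_filter_AIdx (S : SNSystem) {P : Multiset ℕ} (hP : Pos P) (hm : 1 ≤ P.sum)
    (p : ℕ → Prop) [DecidablePred p]
    [DecidablePred fun i : Fin (dimM P) => p (AIdx S P i)] :
    (Finset.univ.filter (fun i : Fin (dimM P) => p (AIdx S P i))).card =
      ∑ a' ∈ P.toFinset.filter p, dimM (subParts P a') := by
  classical
  rw [Finset.card_eq_sum_card_fiberwise
    (f := fun i => AIdx S P i) (t := P.toFinset.filter p) ?_]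
  · apply Finset.sum_congr rfl
    intro a' ha'
    rw [Finset.mem_filter] at ha'
    have heq : (Finset.univ.filter (fun i : Fin (dimM P) => p (AIdx S P i))).filter
        (fun i => AIdx S P i = a') =
        Finset.univ.filter (fun i : Fin (dimM P) => AIdx S P i = a') := by
      ext i
      simp only [Finset.mem_filter, Finset.mem_univ, true_and]
      constructor
      · rintro ⟨_, h⟩; exact h
      · intro h; exact ⟨h ▸ ha'.2, h⟩
    rw [heq, block_card_enum S hP (Multiset.mem_toFinset.mp ha'.1)]
  · intro i hi
    rw [Finset.mem_coe, Finset.mem_filter] at hi ⊢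
    exact ⟨Multiset.mem_toFinset.mpr (AIdx_spec S hP hm i).1, hi.2⟩

lemma block_trace (S : SNSystem) {P : Multiset ℕ} (hP : Pos P) {a' : ℕ} (ha' : a' ∈ P)
    {σ : Equiv.Perm ℕ} (hσc : σ ∈ Submonoid.closure (adjGens (P.sum - 1))) :
    ∑ i ∈ Finset.univ.filter (fun i : Fin (dimM P) => AIdx S P i = a'),
      S.rep P σ (S.enum P i) (S.enum P i) = chiVal S (subParts P a') σ := by
  have hm : 1 ≤ P.sum := sum_pos_of_mem hP ha'
  rw [chiVal_eq_sum]
  apply Finset.sum_bij (fun i _ => delT P (S.enum P i))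
  · intro i hi
    rw [Finset.mem_filter] at hi
    have hc := (AIdx_spec S hP hm i).2
    rw [hi.2] at hc
    exact mem_sytsFinset.mpr (delT_mem hP ha' ((S.enum_spec P).1 i) hc)
  · intro i hi j hj h
    rw [Finset.mem_filter] at hi hj
    have hci := (AIdx_spec S hP hm i).2
    rw [hi.2] at hci
    have hcj := (AIdx_spec S hP hm j).2
    rw [hj.2] at hcj
    have : S.enum P i = S.enum P j := by
      rw [← insT_delT hP ha' ((S.enum_spec P).1 i) hci, h,
        insT_delT hP ha' ((S.enum_spec P).1 j) hcj]
    exact (S.enum_spec P).2.1 this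
  · intro T' hT'
    have hT'' := mem_sytsFinset.mp hT'
    obtain ⟨i, hi⟩ := enum_surjective S P (T := insT P a' T') (insT_mem hP ha' hT'')
    have hA : AIdx S P i = a' := by
      rw [AIdx, hi]
      exact aOf_eq hP ha' (insT_mem hP ha' hT'') (insT_corner T')
    refine ⟨i, Finset.mem_filter.mpr ⟨Finset.mem_univ i, hA⟩, ?_⟩
    rw [hi, delT_insT hP ha' hT'']
  · intro i hi
    rw [Finset.mem_filter] at hi
    have hc := (AIdx_spec S hP hm i).2
    rw [hi.2] at hc
    exact ((rep_restrict S hP hσc) a' ha' _ ((S.enum_spec P).1 i) _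
      ((S.enum_spec P).1 i) hc).1 hc

end Step

section FctStarEq

lemma fctStar_eq (S : SNSystem) {P : Multiset ℕ} (hP : Pos P) (hm : 1 ≤ P.sum)
    {a : ℕ} (ha : a ∈ P) {u : ℝ}
    (ho : (((Finset.univ.filter
        (fun i : Fin (dimM P) => AIdx S P i < a)).card : ℝ)) ≤ u * dimM P)
    (hcum : u * dimM P < ((Finset.univ.filter
        (fun i : Fin (dimM P) => AIdx S P i ≤ a)).card : ℝ)) :
    FctStar P u * Real.sqrt P.sum = (yC P a : ℝ) := by
  classical
  have hN : 0 < dimM P := dimM_pos hP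
  have hNr : (0 : ℝ) < dimM P := by exact_mod_cast hN
  have hsq : 0 < Real.sqrt P.sum := Real.sqrt_pos.mpr (by exact_mod_cast hm)
  have hFct : ∀ z : ℝ, Fct P z =
      (∑ a' ∈ P.toFinset.filter (fun a' => (yC P a' : ℝ) ≤ z * Real.sqrt P.sum),
        (dimM (subParts P a') : ℝ)) / dimM P := by
    intro z
    rw [Fct, ← Finset.sum_filter, Finset.sum_div]
  have hiff : ∀ z : ℝ, Fct P z ≤ u ↔ z < (yC P a : ℝ) / Real.sqrt P.sum := by
    intro z
    constructor
    · intro h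
      by_contra hc
      push_neg at hc
      rw [div_le_iff₀ hsq] at hc
      have hsub : P.toFinset.filter (fun a' => a' ≤ a) ⊆
          P.toFinset.filter (fun a' => (yC P a' : ℝ) ≤ z * Real.sqrt P.sum) := by
        intro a' ha'
        rw [Finset.mem_filter] at ha' ⊢
        refine ⟨ha'.1, ?_⟩
        have hyle : (yC P a' : ℝ) ≤ (yC P a : ℝ) := by
          rcases eq_or_lt_of_le ha'.2 with h1 | h1
          · rw [h1]
          · exact_mod_cast le_of_lt (yC_strictMono (Multiset.mem_toFinset.mp ha'.1) h1)
        linarith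
      have hge : (∑ a' ∈ P.toFinset.filter (fun a' => a' ≤ a),
            (dimM (subParts P a') : ℝ)) ≤
          ∑ a' ∈ P.toFinset.filter (fun a' => (yC P a' : ℝ) ≤ z * Real.sqrt P.sum),
            (dimM (subParts P a') : ℝ) :=
        Finset.sum_le_sum_of_subset_of_nonneg hsub (fun _ _ _ => by positivity)
      have hcardn : (Finset.univ.filter
          (fun i : Fin (dimM P) => AIdx S P i ≤ a)).card =
          ∑ a' ∈ P.toFinset.filter (fun a' => a' ≤ a), dimM (subParts P a') :=
        card_filter_AIdx S hP hm (fun a' => a' ≤ a)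
      have hcard : ((Finset.univ.filter
          (fun i : Fin (dimM P) => AIdx S P i ≤ a)).card : ℝ) =
          ∑ a' ∈ P.toFinset.filter (fun a' => a' ≤ a), (dimM (subParts P a') : ℝ) := by
        rw [hcardn]
        push_cast
        rfl
      rw [hFct z, div_le_iff₀ hNr] at h
      rw [hcard] at hcum
      linarith
    · intro h
      rw [lt_div_iff₀ hsq] at h
      have hsub : P.toFinset.filter (fun a' => (yC P a' : ℝ) ≤ z * Real.sqrt P.sum) ⊆
          P.toFinset.filter (fun a' => a' < a) := by
        intro a' ha'
        rw [Finset.mem_filter] at ha' ⊢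
        refine ⟨ha'.1, ?_⟩
        by_contra hc
        push_neg at hc
        have hyle : (yC P a : ℝ) ≤ (yC P a' : ℝ) := by
          rcases eq_or_lt_of_le hc with h1 | h1
          · rw [h1]
          · exact_mod_cast le_of_lt (yC_strictMono ha h1)
        linarith [ha'.2]
      have hge : (∑ a' ∈ P.toFinset.filter
            (fun a' => (yC P a' : ℝ) ≤ z * Real.sqrt P.sum),
            (dimM (subParts P a') : ℝ)) ≤
          ∑ a' ∈ P.toFinset.filter (fun a' => a' < a), (dimM (subParts P a') : ℝ) :=
        Finset.sum_le_sum_of_subset_of_nonneg hsub (fun _ _ _ => by positivity)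
      have hcardn : (Finset.univ.filter
          (fun i : Fin (dimM P) => AIdx S P i < a)).card =
          ∑ a' ∈ P.toFinset.filter (fun a' => a' < a), dimM (subParts P a') :=
        card_filter_AIdx S hP hm (fun a' => a' < a)
      have hcard : ((Finset.univ.filter
          (fun i : Fin (dimM P) => AIdx S P i < a)).card : ℝ) =
          ∑ a' ∈ P.toFinset.filter (fun a' => a' < a), (dimM (subParts P a') : ℝ) := by
        rw [hcardn]
        push_cast
        rfl
      rw [hFct z, div_le_iff₀ hNr]
      rw [hcard] at ho
      linarith
  have hset : {z : ℝ | Fct P z ≤ u} = Set.Iio ((yC P a : ℝ) / Real.sqrt P.sum) :=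
    Set.ext fun z => (hiff z)
  rw [FctStar, hset, csSup_Iio, div_mul_cancel₀ _ (ne_of_gt hsq)]

end FctStarEq

section StepMain

lemma step_lemma (S : SNSystem) {P : Multiset ℕ} (hP : Pos P) {r : ℕ} (hr : r < P.sum)
    {σ : Equiv.Perm ℕ} (hσ : SuppIn σ r) {u : ℝ} (hu0 : 0 ≤ u) (hu1 : u < 1) :
    ∃ a ∈ P, ∃ u' : ℝ, 0 ≤ u' ∧ u' < 1 ∧
      PTval S P u σ = MTval S P u σ +
        (dimM (subParts P a) : ℝ) / dimM P * PTval S (subParts P a) u' σ := by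
  have hm : 1 ≤ P.sum := by omega
  have hσc : σ ∈ Submonoid.closure (adjGens (P.sum - 1)) :=
    mem_closure_of_suppIn _ σ (suppIn_mono hσ (by omega))
  have hN : 0 < dimM P := dimM_pos hP
  have hNr : (0 : ℝ) < dimM P := by exact_mod_cast hN
  set uN := u * (dimM P : ℝ) with huN
  have huN0 : 0 ≤ uN := mul_nonneg hu0 (le_of_lt hNr)
  have huNlt : uN < (dimM P : ℝ) := by
    have := mul_lt_mul_of_pos_right hu1 hNr
    simpa using this
  have hfl : ⌊uN⌋₊ < dimM P := (Nat.floor_lt huN0).mpr (by exact_mod_cast huNlt)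
  set i₀ : Fin (dimM P) := ⟨⌊uN⌋₊, hfl⟩ with hi₀
  set a := AIdx S P i₀ with haA
  have haP : a ∈ P := (AIdx_spec S hP hm i₀).1
  set o := (Finset.univ.filter (fun i : Fin (dimM P) => AIdx S P i < a)).card with ho
  set dQ := dimM (subParts P a) with hdQdef
  have hio : o ≤ (i₀ : ℕ) ∧ (i₀ : ℕ) < o + dQ := (AIdx_eq_iff S hP haP i₀).mp haA.symm
  have hor : (o : ℝ) ≤ uN := by
    have h1 : (o : ℝ) ≤ (⌊uN⌋₊ : ℝ) := by exact_mod_cast hio.1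
    exact h1.trans (Nat.floor_le huN0)
  have hcumr : uN < (o : ℝ) + dQ := by
    have h1 : uN < (⌊uN⌋₊ : ℝ) + 1 := Nat.lt_floor_add_one uN
    have h3 : ⌊uN⌋₊ + 1 ≤ o + dQ := hio.2
    have h2 : ((⌊uN⌋₊ : ℕ) : ℝ) + 1 ≤ (o : ℝ) + dQ := by exact_mod_cast h3
    linarith
  have hdQ : 0 < dQ := dimM_pos (pos_subParts hP haP)
  have hdQr : (0 : ℝ) < dQ := by exact_mod_cast hdQ
  set u' := (uN - o) / dQ with hu'def
  have hu'0 : 0 ≤ u' := div_nonneg (by linarith) (le_of_lt hdQr)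
  have hu'1 : u' < 1 := (div_lt_one hdQr).mpr (by linarith)
  have hu'dQ : u' * dQ = uN - o := div_mul_cancel₀ _ (ne_of_gt hdQr)
  -- the FctStar identification
  have hcum_card : ((Finset.univ.filter
      (fun i : Fin (dimM P) => AIdx S P i ≤ a)).card : ℝ) = (o : ℝ) + dQ := by
    rw [card_Lset_add S hP haP]
    push_cast
    rfl
  have hfct : FctStar P u * Real.sqrt P.sum = (yC P a : ℝ) :=
    fctStar_eq S hP hm haP hor (by rw [hcum_card]; exact hcumr)
  -- MT side
  have hMT : MTval S P u σ =
      (∑ a' ∈ P.toFinset, if a' < a then chiVal S (subParts P a') σ else 0) /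
        (dimM P : ℝ) := by
    rw [MTval, Finset.sum_div]
    apply Finset.sum_congr rfl
    intro a' ha'
    have ha'P : a' ∈ P := Multiset.mem_toFinset.mp ha'
    rw [hfct]
    by_cases hlt : a' < a
    · rw [if_pos (by exact_mod_cast yC_strictMono ha'P hlt), if_pos hlt, chiHat]
      have hd' : (dimM (subParts P a') : ℝ) ≠ 0 := by
        have := dimM_pos (pos_subParts hP ha'P)
        positivity
      field_simp
    · have hcond : ¬ ((yC P a' : ℝ) < (yC P a : ℝ)) := by
        rcases Nat.lt_or_ge a a' with h1 | h1
        · have h2 : (yC P a : ℝ) < yC P a' := by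
            exact_mod_cast yC_strictMono haP h1
          linarith
        · have h2 : a' = a := by omega
          rw [h2]
          simp
      rw [if_neg hcond, if_neg hlt, zero_div]
  -- the inner block sums
  set g : Fin (dimM P) → ℝ := fun i =>
    if ((i : ℕ) + 1 : ℝ) ≤ uN then S.rep P σ (S.enum P i) (S.enum P i) else 0 with hgdef
  set B : ℝ := ∑ j : Fin dQ,
    if ((j : ℕ) + 1 : ℝ) ≤ u' * (dQ : ℝ) then
      S.rep (subParts P a) σ (S.enum (subParts P a) j) (S.enum (subParts P a) j)
    else 0 with hBdef
  have hidx : ∀ j : Fin dQ, o + (j : ℕ) < dimM P := by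
    intro j
    have h1 := block_index_bound S hP haP
    have := j.isLt
    omega
  have hinner : ∀ a' ∈ P.toFinset,
      ∑ i ∈ Finset.univ.filter (fun i : Fin (dimM P) => AIdx S P i = a'), g i =
        (if a' < a then chiVal S (subParts P a') σ else 0) +
          (if a' = a then B else 0) := by
    intro a' ha'
    have ha'P : a' ∈ P := Multiset.mem_toFinset.mp ha'
    rcases Nat.lt_trichotomy a' a with hlt | heq | hgt
    · rw [if_pos hlt, if_neg (by omega)]
      rw [add_zero, ← block_trace S hP ha'P hσc]
      apply Finset.sum_congr rfl
      intro i hi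
      rw [Finset.mem_filter] at hi
      have h1 : AIdx S P i < a := by omega
      have h2 : (i : ℕ) < o := (AIdx_lt_iff S hP hm a i).mp h1
      have h3 : ((i : ℕ) + 1 : ℝ) ≤ uN := by
        have : ((i : ℕ) : ℝ) + 1 ≤ (o : ℝ) := by exact_mod_cast h2
        linarith
      rw [hgdef]
      simp only [if_pos h3]
    · subst heq
      rw [if_neg (by omega), if_pos rfl, zero_add, hBdef]
      symm
      apply Finset.sum_bij (fun (j : Fin dQ) (_ : j ∈ Finset.univ) =>
        (⟨o + (j : ℕ), hidx j⟩ : Fin (dimM P)))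
      · intro j _
        rw [Finset.mem_filter]
        refine ⟨Finset.mem_univ _, ?_⟩
        rw [AIdx_eq_iff S hP haP]
        have hval : ((⟨o + (j : ℕ), hidx j⟩ : Fin (dimM P)) : ℕ) = o + (j : ℕ) := rfl
        rw [hval]
        have := j.isLt
        omega
      · intro j1 _ j2 _ h
        have := congrArg Fin.val h
        simp only at this
        exact Fin.ext (by omega)
      · intro i hi
        rw [Finset.mem_filter] at hi
        have h1 := (AIdx_eq_iff S hP haP i).mp hi.2
        refine ⟨⟨(i : ℕ) - o, by omega⟩, Finset.mem_univ _, ?_⟩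
        apply Fin.ext
        simp only
        omega
      · intro j _
        have hblockj : AIdx S P ⟨o + (j : ℕ), hidx j⟩ = a := by
          rw [AIdx_eq_iff S hP haP]
          have hval : ((⟨o + (j : ℕ), hidx j⟩ : Fin (dimM P)) : ℕ) = o + (j : ℕ) := rfl
          rw [hval]
          have := j.isLt
          omega
        have hcornerv : (S.enum P ⟨o + (j : ℕ), hidx j⟩) (corner P a) = P.sum := by
          have hc := (AIdx_spec S hP hm ⟨o + (j : ℕ), hidx j⟩).2
          rw [hblockj] at hc
          exact hc
        have hrep : S.rep (subParts P a) σ (S.enum (subParts P a) j)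
            (S.enum (subParts P a) j) =
            S.rep P σ (S.enum P ⟨o + (j : ℕ), hidx j⟩)
              (S.enum P ⟨o + (j : ℕ), hidx j⟩) := by
          rw [← enum_block S hP haP j (hidx j)]
          exact (((rep_restrict S hP hσc) a haP _ ((S.enum_spec P).1 _) _
            ((S.enum_spec P).1 _) hcornerv).1 hcornerv).symm
        have hcond : (((j : ℕ) + 1 : ℝ) ≤ u' * (dQ : ℝ)) ↔
            ((((⟨o + (j : ℕ), hidx j⟩ : Fin (dimM P)) : ℕ) + 1 : ℝ) ≤ uN) := by
          rw [hu'dQ]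
          simp only
          push_cast
          constructor <;> intro <;> linarith
        rw [hgdef]
        simp only
        rw [if_congr hcond hrep rfl]
    · rw [if_neg (by omega), if_neg (by omega), add_zero]
      apply Finset.sum_eq_zero
      intro i hi
      rw [Finset.mem_filter] at hi
      have h1 : ¬ (AIdx S P i ≤ a) := by omega
      rw [AIdx_le_iff S hP hm a i] at h1
      have h2 : (o : ℝ) + dQ ≤ (i : ℕ) := by
        have h3 : (Finset.univ.filter
            (fun i : Fin (dimM P) => AIdx S P i ≤ a)).card ≤ (i : ℕ) := by omega
        calc (o : ℝ) + dQ = _ := hcum_card.symm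
          _ ≤ ((i : ℕ) : ℝ) := by exact_mod_cast h3
      have h4 : ¬ (((i : ℕ) + 1 : ℝ) ≤ uN) := by
        push_neg
        linarith
      rw [hgdef]
      simp only [if_neg h4]
  -- numerator splitting
  have hnum : ∑ i : Fin (dimM P), g i =
      (∑ a' ∈ P.toFinset, if a' < a then chiVal S (subParts P a') σ else 0) + B := by
    rw [← Finset.sum_fiberwise_of_maps_to (g := fun i => AIdx S P i) (t := P.toFinset)
      (fun i _ => Multiset.mem_toFinset.mpr (AIdx_spec S hP hm i).1) g]
    rw [Finset.sum_congr rfl hinner, Finset.sum_add_distrib]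
    congr 1
    rw [Finset.sum_ite_eq' P.toFinset a (fun _ => B), if_pos (Multiset.mem_toFinset.mpr haP)]
  -- assembling
  refine ⟨a, haP, u', hu'0, hu'1, ?_⟩
  have hPT : PTval S P u σ = (∑ i : Fin (dimM P), g i) / (dimM P : ℝ) := rfl
  have hPTQ : PTval S (subParts P a) u' σ = B / (dQ : ℝ) := rfl
  rw [hPT, hPTQ, hnum, hMT, add_div]
  congr 1
  rw [div_mul_div_comm, mul_comm (dQ : ℝ) B, mul_div_mul_right _ _ (ne_of_gt hdQr)]

end StepMain

section Iterate

lemma iter_lemma (S : SNSystem) {r : ℕ} {σ : Equiv.Perm ℕ} (hσ : SuppIn σ r) :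
    ∀ (s : ℕ) (P : Multiset ℕ) (u : ℝ), Pos P → 0 < s → r + s ≤ P.sum →
      0 ≤ u → u < 1 →
      ∃ (μ : ℕ → Multiset ℕ) (uu : ℕ → ℝ),
        μ s = P ∧ uu s = u ∧
        (∀ i < s, SubOf (μ i) (μ (i + 1))) ∧
        (∀ i ≤ s, 0 ≤ uu i ∧ uu i < 1) ∧
        PTval S P u σ =
          (∑ i ∈ Finset.Icc 1 s,
            (dimM (μ i) : ℝ) / dimM P * MTval S (μ i) (uu i) σ) +
            (dimM (μ 0) : ℝ) / dimM P * PTval S (μ 0) (uu 0) σ := by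
  intro s
  induction s with
  | zero => intro P u _ h0; omega
  | succ s ih =>
    intro P u hP hs hsum hu0 hu1
    have hNr : (0 : ℝ) < dimM P := by exact_mod_cast dimM_pos hP
    obtain ⟨a, haP, u', hu'0, hu'1, hstep⟩ :=
      step_lemma S hP (show r < P.sum by omega) hσ hu0 hu1
    have hQpos : Pos (subParts P a) := pos_subParts hP haP
    have hQsum : (subParts P a).sum = P.sum - 1 := sum_subParts hP haP
    have hdQr : (0 : ℝ) < dimM (subParts P a) := by
      exact_mod_cast dimM_pos hQpos
    by_cases hs0 : s = 0
    · subst hs0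
      refine ⟨fun i => if i = 0 then subParts P a else P,
        fun i => if i = 0 then u' else u, by simp, by simp, ?_, ?_, ?_⟩
      · intro i hi
        have hi0 : i = 0 := by omega
        subst hi0
        simp only [if_pos rfl, if_neg one_ne_zero]
        exact ⟨a, haP, rfl⟩
      · intro i _
        by_cases h : i = 0
        · simp only [if_pos h]; exact ⟨hu'0, hu'1⟩
        · simp only [if_neg h]; exact ⟨hu0, hu1⟩
      · rw [Finset.Icc_self, Finset.sum_singleton]
        simp only [if_neg one_ne_zero, if_pos rfl]
        rw [div_self (ne_of_gt hNr), one_mul]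
        exact hstep
    · obtain ⟨μ, uu, hμs, huus, hchain, hbounds, heq⟩ :=
        ih (subParts P a) u' hQpos (by omega) (by omega) hu'0 hu'1
      refine ⟨fun i => if i = s + 1 then P else μ i,
        fun i => if i = s + 1 then u else uu i, by simp, by simp, ?_, ?_, ?_⟩
      · intro i hi
        by_cases h : i + 1 = s + 1
        · have hieq : i = s := by omega
          subst hieq
          simp only [if_pos rfl, if_neg (show i ≠ i + 1 by omega)]
          rw [hμs]
          exact ⟨a, haP, rfl⟩
        · simp only [if_neg h, if_neg (show i ≠ s + 1 by omega)]
          exact hchain i (by omega)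
      · intro i hi
        by_cases h : i = s + 1
        · simp only [if_pos h]; exact ⟨hu0, hu1⟩
        · simp only [if_neg h]; exact hbounds i (by omega)
      · rw [Finset.sum_Icc_succ_top (by omega : 1 ≤ s + 1)]
        beta_reduce
        have e1 : (if s + 1 = s + 1 then P else μ (s + 1)) = P := if_pos rfl
        have e2 : (if s + 1 = s + 1 then u else uu (s + 1)) = u := if_pos rfl
        have e3 : (if (0 : ℕ) = s + 1 then P else μ 0) = μ 0 := if_neg (by omega)
        have e4 : (if (0 : ℕ) = s + 1 then u else uu 0) = uu 0 := if_neg (by omega)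
        rw [e1, e2, e3, e4]
        have hsum_congr : ∑ i ∈ Finset.Icc 1 s,
            (dimM (if i = s + 1 then P else μ i) : ℝ) / dimM P *
              MTval S (if i = s + 1 then P else μ i)
                (if i = s + 1 then u else uu i) σ =
            ∑ i ∈ Finset.Icc 1 s,
              (dimM (μ i) : ℝ) / dimM P * MTval S (μ i) (uu i) σ := by
          apply Finset.sum_congr rfl
          intro i hi
          rw [Finset.mem_Icc] at hi
          simp only [if_neg (show i ≠ s + 1 by omega)]
        rw [hsum_congr]
        rw [hstep, heq, div_self (ne_of_gt hNr), one_mul]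
        rw [mul_add, Finset.mul_sum]
        have hterm : ∀ i ∈ Finset.Icc 1 s,
            (dimM (subParts P a) : ℝ) / dimM P *
              ((dimM (μ i) : ℝ) / dimM (subParts P a) * MTval S (μ i) (uu i) σ) =
            (dimM (μ i) : ℝ) / dimM P * MTval S (μ i) (uu i) σ := by
          intro i _
          field_simp
        rw [Finset.sum_congr rfl hterm]
        have hlast : (dimM (subParts P a) : ℝ) / dimM P *
            ((dimM (μ 0) : ℝ) / dimM (subParts P a) * PTval S (μ 0) (uu 0) σ) =
            (dimM (μ 0) : ℝ) / dimM P * PTval S (μ 0) (uu 0) σ := by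
          field_simp
        rw [hlast]
        ring

end Iterate


/-- iterated decomposition of the partial trace.
Let `σ ∈ S_r` and `s > 0` with `n − s > r`.  For every `λ ⊢ n` there are a chain of
partitions `μ⁽⁰⁾ ↗ μ⁽¹⁾ ↗ … ↗ μ⁽ˢ⁾ = λ` and reals `0 ≤ u⁽⁰⁾, …, u⁽ˢ⁾ < 1` with
`u⁽ˢ⁾ = u` such that
`PT^λ_u(σ) = Σ_{i=1}^s (dim μ⁽ⁱ⁾/dim λ)·MT^{μ⁽ⁱ⁾}_{u⁽ⁱ⁾}(σ)
  + (dim μ⁽⁰⁾/dim λ)·PT^{μ⁽⁰⁾}_{u⁽⁰⁾}(σ)`. -/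
theorem statement8 (S : SNSystem) (n r s : ℕ) (hs : 0 < s) (hrs : r < n - s)
    (σ : Equiv.Perm ℕ) (hσ : SuppIn σ r) (u : ℝ) (hu0 : 0 ≤ u) (hu1 : u < 1)
    (lam : Nat.Partition n) :
    ∃ (μ : ℕ → Multiset ℕ) (uu : ℕ → ℝ),
      μ s = lam.parts ∧ uu s = u ∧
      (∀ i < s, SubOf (μ i) (μ (i + 1))) ∧
      (∀ i ≤ s, 0 ≤ uu i ∧ uu i < 1) ∧
      PTval S lam.parts u σ =
        (∑ i ∈ Finset.Icc 1 s, (dimM (μ i) : ℝ) / dimM lam.parts * MTval S (μ i) (uu i) σ) +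
          (dimM (μ 0) : ℝ) / dimM lam.parts * PTval S (μ 0) (uu 0) σ := by
  have hpos : Pos lam.parts := fun x hx => lam.parts_pos hx
  have hsum : lam.parts.sum = n := lam.parts_sum
  have h1 : r + s ≤ lam.parts.sum := by omega
  exact iter_lemma S hσ s lam.parts u hpos hs h1 hu0 hu1

end PaperPlancherel
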